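/- arXiv:1804.09351 — 14 statements merged into one kernel-verified Lean document; each statement's English description precedes it below -/
import Mathlib

section
/- Let S be a group bound monoid (every element of S has a positive power lying in a subgroup of S, equivalently a positive power that is H-related to an idempotent). Then S is local (the set of non-units S ∖ H₁ is a two-sided ideal of S, where H₁ is the group of units), and Green's relations D and J coincide on S: for all a,b ∈ S, SaS = SbS if and only if there exists c ∈ S with aS = cS and Sc = Sb. -/
universe u

section Aux

variable {S : Type u} [Monoid S]

private def IsGB (S : Type u) [Monoid S] : Prop :=
  ∀ a : S, ∃ n : ℕ, 1 ≤ n ∧ ∃ e : S, e * e = e ∧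
    Set.range (fun s => a ^ n * s) = Set.range (fun s => e * s) ∧
    Set.range (fun s => s * a ^ n) = Set.range (fun s => s * e)

private lemma iter {x w t : S} (h : x = w * x * t) : ∀ k, x = w ^ k * x * t ^ k := by
  intro k
  induction k with
  | zero => simp
  | succ k ih =>
    calc x = w ^ k * x * t ^ k := ih
    _ = w ^ k * (w * x * t) * t ^ k := by rw [← h]
    _ = w ^ (k+1) * x * t ^ (k+1) := by
        rw [pow_succ w, pow_succ' t]
        simp [mul_assoc]

private lemma key_right (hgb : IsGB S) {x w t : S} (h : x = w * x * t) :
    ∃ d, x = (x * t) * d := by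
  obtain ⟨n, hn, e, he, hre, hle⟩ := hgb t
  obtain ⟨c2, hc2⟩ : ∃ c, t ^ n * c = e := by
    have hm : e ∈ Set.range (fun s => e * s) := ⟨e, he⟩
    rw [← hre] at hm; exact hm
  obtain ⟨c4, hc4⟩ : ∃ c, c * e = t ^ n := by
    have hm : t ^ n ∈ Set.range (fun s => s * t ^ n) := ⟨1, one_mul _⟩
    rw [hle] at hm; exact hm
  have hte : t ^ n * e = t ^ n := by
    conv_lhs => rw [← hc4]
    rw [mul_assoc, he, hc4]
  have ht2e : t ^ (2*n) * e = t ^ (2*n) := by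
    rw [two_mul, pow_add, mul_assoc, hte]
  have h2n := iter h (2*n)
  have hxe : x = x * e := by
    calc x = w ^ (2*n) * x * t ^ (2*n) := h2n
    _ = (w ^ (2*n) * x * t ^ (2*n)) * e := by conv_rhs => rw [mul_assoc, ht2e]
    _ = x * e := by rw [← h2n]
  have hpow : t * t ^ (n-1) = t ^ n := by
    rw [← pow_succ']; congr 1; omega
  refine ⟨t ^ (n-1) * c2, ?_⟩
  calc x = x * e := hxe
  _ = x * (t ^ n * c2) := by rw [hc2]
  _ = x * ((t * t ^ (n-1)) * c2) := by rw [hpow]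
  _ = (x * t) * (t ^ (n-1) * c2) := by simp [mul_assoc]

private lemma key_left (hgb : IsGB S) {x s v : S} (h : x = s * x * v) :
    ∃ d, x = d * (s * x) := by
  obtain ⟨n, hn, e, he, hre, hle⟩ := hgb s
  obtain ⟨c2, hc2⟩ : ∃ c, e * c = s ^ n := by
    have hm : s ^ n ∈ Set.range (fun z => s ^ n * z) := ⟨1, mul_one _⟩
    rw [hre] at hm; exact hm
  obtain ⟨c4, hc4⟩ : ∃ c, c * s ^ n = e := by
    have hm : e ∈ Set.range (fun z => z * e) := ⟨e, he⟩
    rw [← hle] at hm; exact hm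
  have hes : e * s ^ n = s ^ n := by
    conv_lhs => rw [← hc2]
    rw [← mul_assoc, he, hc2]
  have hes2 : e * s ^ (2*n) = s ^ (2*n) := by
    rw [two_mul, pow_add, ← mul_assoc, hes]
  have h2n := iter h (2*n)
  have hex : x = e * x := by
    calc x = s ^ (2*n) * x * v ^ (2*n) := h2n
    _ = e * (s ^ (2*n) * x * v ^ (2*n)) := by
        rw [← mul_assoc, ← mul_assoc, hes2]
    _ = e * x := by rw [← h2n]
  have hpow : s ^ (n-1) * s = s ^ n := by
    rw [← pow_succ]; congr 1; omega
  refine ⟨c4 * s ^ (n-1), ?_⟩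
  calc x = e * x := hex
  _ = (c4 * s ^ n) * x := by rw [hc4]
  _ = (c4 * (s ^ (n-1) * s)) * x := by rw [hpow]
  _ = (c4 * s ^ (n-1)) * (s * x) := by simp [mul_assoc]

private lemma pow_left_inv {u x : S} (h : u * x = 1) : ∀ k, u ^ k * x ^ k = 1 := by
  intro k
  induction k with
  | zero => simp
  | succ k ih =>
    rw [pow_succ' u, pow_succ x, mul_assoc, ← mul_assoc (u ^ k), ih, one_mul, h]

private lemma pow_right_inv {u x : S} (h : x * u = 1) : ∀ k, x ^ k * u ^ k = 1 := by
  intro k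
  induction k with
  | zero => simp
  | succ k ih =>
    rw [pow_succ' x, pow_succ u, mul_assoc, ← mul_assoc (x ^ k), ih, one_mul, h]

private lemma left_inv_unit (hgb : IsGB S) {x : S} (hli : ∃ u, u * x = 1) : IsUnit x := by
  obtain ⟨u, hu⟩ := hli
  obtain ⟨n, hn, e, he, hre, hle⟩ := hgb x
  obtain ⟨c, hc⟩ : ∃ c, c * e = x ^ n := by
    have hm : x ^ n ∈ Set.range (fun s => s * x ^ n) := ⟨1, one_mul _⟩
    rw [hle] at hm; exact hm
  have hz : (u ^ n * c) * e = 1 := by rw [mul_assoc, hc, pow_left_inv hu n]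
  have he1 : e = 1 := by
    calc e = 1 * e := (one_mul e).symm
    _ = ((u ^ n * c) * e) * e := by rw [hz]
    _ = (u ^ n * c) * (e * e) := by rw [mul_assoc]
    _ = 1 := by rw [he, hz]
  obtain ⟨r, hr⟩ : ∃ r, x ^ n * r = e := by
    have hm : e ∈ Set.range (fun s => e * s) := ⟨e, he⟩
    rw [← hre] at hm; exact hm
  obtain ⟨l, hl⟩ : ∃ l, l * x ^ n = e := by
    have hm : e ∈ Set.range (fun s => s * e) := ⟨e, he⟩
    rw [← hle] at hm; exact hm
  rw [he1] at hr hl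
  have hpow : x * x ^ (n-1) = x ^ n := by
    rw [← pow_succ']; congr 1; omega
  have hpow' : x ^ (n-1) * x = x ^ n := by
    rw [← pow_succ]; congr 1; omega
  have h1 : x * (x ^ (n-1) * r) = 1 := by rw [← mul_assoc, hpow, hr]
  have h2 : (l * x ^ (n-1)) * x = 1 := by rw [mul_assoc, hpow', hl]
  have heq : x ^ (n-1) * r = l * x ^ (n-1) := by
    calc x ^ (n-1) * r = 1 * (x ^ (n-1) * r) := (one_mul _).symm
    _ = ((l * x ^ (n-1)) * x) * (x ^ (n-1) * r) := by rw [h2]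
    _ = (l * x ^ (n-1)) * (x * (x ^ (n-1) * r)) := by rw [mul_assoc]
    _ = l * x ^ (n-1) := by rw [h1, mul_one]
  exact ⟨⟨x, x ^ (n-1) * r, h1, by rw [heq]; exact h2⟩, rfl⟩

private lemma right_inv_unit (hgb : IsGB S) {x : S} (hri : ∃ u, x * u = 1) : IsUnit x := by
  obtain ⟨u, hu⟩ := hri
  obtain ⟨n, hn, e, he, hre, hle⟩ := hgb x
  obtain ⟨c, hc⟩ : ∃ c, e * c = x ^ n := by
    have hm : x ^ n ∈ Set.range (fun s => x ^ n * s) := ⟨1, mul_one _⟩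
    rw [hre] at hm; exact hm
  have hz : e * (c * u ^ n) = 1 := by rw [← mul_assoc, hc, pow_right_inv hu n]
  have he1 : e = 1 := by
    calc e = e * 1 := (mul_one e).symm
    _ = e * (e * (c * u ^ n)) := by rw [hz]
    _ = (e * e) * (c * u ^ n) := by rw [mul_assoc]
    _ = 1 := by rw [he, hz]
  obtain ⟨r, hr⟩ : ∃ r, x ^ n * r = e := by
    have hm : e ∈ Set.range (fun s => e * s) := ⟨e, he⟩
    rw [← hre] at hm; exact hm
  obtain ⟨l, hl⟩ : ∃ l, l * x ^ n = e := by
    have hm : e ∈ Set.range (fun s => s * e) := ⟨e, he⟩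
    rw [← hle] at hm; exact hm
  rw [he1] at hr hl
  have hpow : x * x ^ (n-1) = x ^ n := by
    rw [← pow_succ']; congr 1; omega
  have hpow' : x ^ (n-1) * x = x ^ n := by
    rw [← pow_succ]; congr 1; omega
  have h1 : x * (x ^ (n-1) * r) = 1 := by rw [← mul_assoc, hpow, hr]
  have h2 : (l * x ^ (n-1)) * x = 1 := by rw [mul_assoc, hpow', hl]
  have heq : x ^ (n-1) * r = l * x ^ (n-1) := by
    calc x ^ (n-1) * r = 1 * (x ^ (n-1) * r) := (one_mul _).symm
    _ = ((l * x ^ (n-1)) * x) * (x ^ (n-1) * r) := by rw [h2]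
    _ = (l * x ^ (n-1)) * (x * (x ^ (n-1) * r)) := by rw [mul_assoc]
    _ = l * x ^ (n-1) := by rw [h1, mul_one]
  exact ⟨⟨x, x ^ (n-1) * r, h1, by rw [heq]; exact h2⟩, rfl⟩

end Aux

/-- A group bound monoid (every element has a positive power
`H`-related to an idempotent) is local (the non-units form a two-sided ideal),
and Green's relations `D` and `J` coincide. Here `aS = Set.range (a * ·)`,
`Sa = Set.range (· * a)` and `SaS = {x | ∃ u v, x = u * a * v}`. -/
theorem stmt_0 {S : Type u} [Monoid S]
    (hgb : ∀ a : S, ∃ n : ℕ, 1 ≤ n ∧ ∃ e : S, e * e = e ∧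
      Set.range (fun s => a ^ n * s) = Set.range (fun s => e * s) ∧
      Set.range (fun s => s * a ^ n) = Set.range (fun s => s * e)) :
    (∀ x : S, ¬ IsUnit x → ∀ s : S, ¬ IsUnit (s * x) ∧ ¬ IsUnit (x * s)) ∧
    (∀ a b : S,
      ({x : S | ∃ u v : S, x = u * a * v} = {x : S | ∃ u v : S, x = u * b * v}) ↔
      ∃ c : S, Set.range (fun s => a * s) = Set.range (fun s => c * s) ∧
               Set.range (fun s => s * c) = Set.range (fun s => s * b)) := by
  have hGB : IsGB S := hgb
  constructor
  · intro x hx s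
    constructor
    · intro h
      obtain ⟨t, ht⟩ := h.exists_left_inv
      exact hx (left_inv_unit hGB ⟨t * s, by rw [mul_assoc]; exact ht⟩)
    · intro h
      obtain ⟨t, ht⟩ := h.exists_right_inv
      exact hx (right_inv_unit hGB ⟨s * t, by rw [← mul_assoc]; exact ht⟩)
  · intro a b
    constructor
    · -- J implies D
      intro hJ
      have ha : a ∈ {x : S | ∃ u v : S, x = u * b * v} := by
        rw [← hJ]; exact ⟨1, 1, by simp⟩
      obtain ⟨u, v, hab⟩ := ha
      have hb : b ∈ {x : S | ∃ u v : S, x = u * a * v} := by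
        rw [hJ]; exact ⟨1, 1, by simp⟩
      obtain ⟨p, q, hba⟩ := hb
      have h1 : a = (u * p) * a * (q * v) := by
        conv_lhs => rw [hab, hba]
        simp [mul_assoc]
      have h2 : a * q = (u * p) * (a * q) * (v * q) := by
        conv_lhs => rw [hab, hba]
        simp [mul_assoc]
      obtain ⟨d, hd⟩ := key_right hGB h1
      obtain ⟨d', hd'⟩ := key_left hGB h2
      have hub : (u * p) * (a * q) = u * b := by
        rw [hba]; simp [mul_assoc]
      rw [hub] at hd'
      refine ⟨a * q, ?_, ?_⟩
      · ext y
        constructor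
        · rintro ⟨s, rfl⟩
          refine ⟨v * (d * s), ?_⟩
          show (a * q) * (v * (d * s)) = a * s
          conv_rhs => rw [hd]
          simp [mul_assoc]
        · rintro ⟨s, rfl⟩
          exact ⟨q * s, by simp [mul_assoc]⟩
      · ext y
        constructor
        · rintro ⟨s, rfl⟩
          refine ⟨s * (d' * u), ?_⟩
          show (s * (d' * u)) * b = s * (a * q)
          conv_rhs => rw [hd']
          simp [mul_assoc]
        · rintro ⟨s, rfl⟩
          refine ⟨s * p, ?_⟩
          show (s * p) * (a * q) = s * b
          conv_rhs => rw [hba]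
          simp [mul_assoc]
    · -- D implies J
      rintro ⟨c, h1, h2⟩
      obtain ⟨s1, hs1⟩ : ∃ s, c * s = a := by
        have hm : a ∈ Set.range (fun s => a * s) := ⟨1, mul_one _⟩
        rw [h1] at hm; exact hm
      obtain ⟨s2, hs2⟩ : ∃ s, a * s = c := by
        have hm : c ∈ Set.range (fun s => c * s) := ⟨1, mul_one _⟩
        rw [← h1] at hm; exact hm
      obtain ⟨t1, ht1⟩ : ∃ t, t * b = c := by
        have hm : c ∈ Set.range (fun s => s * c) := ⟨1, one_mul _⟩
        rw [h2] at hm; exact hm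
      obtain ⟨t2, ht2⟩ : ∃ t, t * c = b := by
        have hm : b ∈ Set.range (fun s => s * b) := ⟨1, one_mul _⟩
        rw [← h2] at hm; exact hm
      ext y
      simp only [Set.mem_setOf_eq]
      constructor
      · rintro ⟨u', v', rfl⟩
        refine ⟨u' * t1, s1 * v', ?_⟩
        rw [← hs1, ← ht1]
        simp [mul_assoc]
      · rintro ⟨u', v', rfl⟩
        refine ⟨u' * t2, s2 * v', ?_⟩
        rw [← ht2, ← hs2]
        simp [mul_assoc]
end

section
/- Let κ be an infinite cardinal, I a set of cardinality κ, F a κ-regular filter on I, and (A_i)_{i∈I} a family of sets each of infinite cardinality λ. Then the reduced product (∏_{i∈I} A_i)/F — the quotient of ∏_{i∈I} A_i by the relation f ≡ g iff {i ∈ I | f i = g i} ∈ F — has cardinality λ^κ. -/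
universe u

/-- The reduced-product equivalence on `∀ i, A i` induced by a filter `F`:
`f ≡ g` iff `{i | f i = g i} ∈ F`. -/
def redSetoid {I : Type u} (F : Filter I) (A : I → Type u) : Setoid (∀ i, A i) where
  r f g := {i | f i = g i} ∈ F
  iseqv := by
    constructor
    · intro f
      have h : {i | f i = f i} = Set.univ := by ext i; simp
      rw [h]; exact Filter.univ_mem
    · intro f g h
      exact Filter.mem_of_superset h fun i hi => Eq.symm hi
    · intro f g k h1 h2
      exact Filter.mem_of_superset (Filter.inter_mem h1 h2) fun i hi => hi.1.trans hi.2

/-- if `F` is a `κ`-regular (proper) filter on a set `I` of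
cardinality `κ` and each `A i` has infinite cardinality `λ`, then the reduced
product `(∏ᵢ A i)/F` has cardinality `λ ^ κ`. -/
theorem stmt_3 (κ : Cardinal.{u}) (hκ : Cardinal.aleph0 ≤ κ)
    (I : Type u) (hI : Cardinal.mk I = κ)
    (F : Filter I) (hF : F.NeBot)
    (Sfam : Quotient.out κ → Set I)
    (hinj : Function.Injective Sfam)
    (hmem : ∀ α, Sfam α ∈ F)
    (hint : ∀ J : Set (Quotient.out κ), J.Infinite → ⋂ α ∈ J, Sfam α = ∅)
    (lam : Cardinal.{u}) (hlam : Cardinal.aleph0 ≤ lam)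
    (A : I → Type u) (hA : ∀ i, Cardinal.mk (A i) = lam) :
    Cardinal.mk (Quotient (redSetoid F A)) = lam ^ κ := by
  classical
  haveI := hF
  apply le_antisymm
  · calc Cardinal.mk (Quotient (redSetoid F A)) ≤ Cardinal.mk (∀ i, A i) :=
          Cardinal.mk_quotient_le
      _ = lam ^ κ := by
          rw [Cardinal.mk_pi]
          simp only [hA]
          rw [Cardinal.prod_const', hI]
  · have hS : ∀ i, {α : Quotient.out κ | i ∈ Sfam α}.Finite := by
      intro i
      by_contra h
      have hi : i ∈ ⋂ α ∈ {α : Quotient.out κ | i ∈ Sfam α}, Sfam α := by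
        simp only [Set.mem_iInter]; exact fun α hα => hα
      rw [hint _ h] at hi
      exact hi
    have key : ∀ i, Nonempty (({α : Quotient.out κ // i ∈ Sfam α} → Quotient.out lam) ↪ A i) := by
      intro i
      rw [← Cardinal.le_def]
      haveI : Finite {α : Quotient.out κ // i ∈ Sfam α} := (hS i).to_subtype
      calc Cardinal.mk ({α : Quotient.out κ // i ∈ Sfam α} → Quotient.out lam)
          = lam ^ Cardinal.mk {α : Quotient.out κ // i ∈ Sfam α} := by
            rw [← Cardinal.power_def]
            simp [Cardinal.mk_out]
        _ ≤ lam := Cardinal.pow_le hlam (Cardinal.lt_aleph0_of_finite _)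
        _ = Cardinal.mk (A i) := (hA i).symm
    let e : ∀ i, ({α : Quotient.out κ // i ∈ Sfam α} → Quotient.out lam) ↪ A i :=
      fun i => (key i).some
    let h : (Quotient.out κ → Quotient.out lam) → ∀ i, A i :=
      fun f i => e i (fun α => f α.1)
    have hinj' : Function.Injective
        (fun f => Quotient.mk (redSetoid F A) (h f)) := by
      intro f g hfg
      by_contra hne
      obtain ⟨α, hα⟩ := Function.ne_iff.1 hne
      have hmemF : {i | h f i = h g i} ∈ F := Quotient.exact hfg
      have hempty : {i | h f i = h g i} ∩ Sfam α = ∅ := by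
        ext i
        simp only [Set.mem_inter_iff, Set.mem_setOf_eq, Set.mem_empty_iff_false,
          iff_false, not_and]
        intro heq hiS
        exact hα (congrFun ((e i).injective heq) ⟨α, hiS⟩)
      have hbad := Filter.inter_mem hmemF (hmem α)
      rw [hempty] at hbad
      exact Filter.empty_notMem F hbad
    calc lam ^ κ = Cardinal.mk (Quotient.out κ → Quotient.out lam) := by
          rw [← Cardinal.power_def]
          simp [Cardinal.mk_out]
      _ ≤ Cardinal.mk (Quotient (redSetoid F A)) := Cardinal.mk_le_of_injective hinj'
end

section
/- Let S be a monoid such that for every set I and every ultrafilter Φ on I, the ultrapower S^I/Φ of the left S-act S satisfies condition (E). Then for all s, t ∈ S the set r(s,t) = {u ∈ S | su = tu} is either empty or finitely generated as a right ideal of S: there exist w₁, …, wₙ ∈ r(s,t) with r(s,t) = w₁S ∪ ⋯ ∪ wₙS. -/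
universe u

/-- Condition (E) for a left `S`-act `B`. -/
def CondE (S : Type u) [Monoid S] (B : Type u) [MulAction S B] : Prop :=
  ∀ (s t : S) (x : B), s • x = t • x →
    ∃ (z : B) (s' : S), x = s' • z ∧ s * s' = t * s'

/-- if every ultrapower `S^I/Φ` of the left `S`-act `S` satisfies
condition (E), then for all `s, t ∈ S` the right annihilator
`r(s,t) = {u | su = tu}` is empty or a finitely generated right ideal:
`r(s,t) = w₁S ∪ ⋯ ∪ wₙS` with each `wᵢ ∈ r(s,t)`. -/
theorem stmt_4 {S : Type u} [Monoid S]
    (h : ∀ (I : Type u) (Φ : Ultrafilter I), CondE S (Filter.Germ (Φ : Filter I) S))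
    (s t : S) :
    {x : S | s * x = t * x} = ∅ ∨
    ∃ (n : ℕ) (w : Fin n → S),
      (∀ i, s * w i = t * w i) ∧
      {x : S | s * x = t * x} = ⋃ i, Set.range (fun c => w i * c) := by
  by_cases hne : {x : S | s * x = t * x} = ∅
  · exact Or.inl hne
  right
  by_contra hfg
  push_neg at hfg
  set r : Set S := {x : S | s * x = t * x} with hrdef
  have key : ∀ F : Finset r, ∃ x, s * x = t * x ∧ ∀ w ∈ F, ∀ c : S, x ≠ (w : S) * c := by
    intro F
    by_contra hc
    push_neg at hc
    refine hfg F.card (fun i => ((F.equivFin.symm i : r) : S)) (fun i => (F.equivFin.symm i : r).2) ?_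
    ext x
    constructor
    · intro hx
      obtain ⟨w, hwF, c, hco⟩ := hc x hx
      refine Set.mem_iUnion.mpr ⟨F.equivFin ⟨w, hwF⟩, c, ?_⟩
      simp [hco]
    · intro hx
      obtain ⟨i, c, hco⟩ := Set.mem_iUnion.mp hx
      have hw : s * ((F.equivFin.symm i : r) : S) = t * ((F.equivFin.symm i : r) : S) :=
        (F.equivFin.symm i : r).2
      show s * x = t * x
      rw [← hco, ← mul_assoc, ← mul_assoc, hw]
  choose f hf1 hf2 using key
  haveI : Nonempty r := Set.nonempty_iff_ne_empty.mpr hne |>.to_subtype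
  let Φ : Ultrafilter (Finset r) := Ultrafilter.of Filter.atTop
  have hΦ : (Φ : Filter (Finset r)) ≤ Filter.atTop := Ultrafilter.of_le _
  obtain ⟨z, s', hz, hs'⟩ := h (Finset r) Φ s t (↑f : Filter.Germ (Φ : Filter (Finset r)) S) (by
    rw [← Filter.Germ.coe_smul, ← Filter.Germ.coe_smul]
    exact Filter.Germ.coe_eq.mpr (Filter.Eventually.of_forall fun F => hf1 F))
  obtain ⟨g, rfl⟩ := Quotient.exists_rep z
  have hz' : ∀ᶠ F in (Φ : Filter (Finset r)), f F = s' * g F := by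
    have : (↑f : Filter.Germ (Φ : Filter (Finset r)) S) = ↑(fun F => s' * g F) := by
      rw [hz, show (⟦g⟧ : Filter.Germ (Φ : Filter (Finset ↑r)) S) = Filter.Germ.ofFun g from rfl, ← Filter.Germ.coe_smul]; rfl
    exact Filter.Germ.coe_eq.mp this
  have hmem : ∀ᶠ F in (Φ : Filter (Finset r)), (⟨s', hs'⟩ : r) ∈ F := by
    apply hΦ
    have : ∀ᶠ F in (Filter.atTop : Filter (Finset r)), {(⟨s', hs'⟩ : r)} ≤ F :=
      Filter.eventually_ge_atTop _
    filter_upwards [this] with F hF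
    exact hF (Finset.mem_singleton_self _)
  obtain ⟨F, h1, h2⟩ := (hz'.and hmem).exists
  exact hf2 F ⟨s', hs'⟩ h2 (g F) h1
end

section
/- Let S be a monoid such that for every set I and every ultrafilter Φ on I, the ultrapower S^I/Φ of the left S-act S satisfies condition (P). Then for all s, t ∈ S the set R(s,t) = {(u,v) ∈ S × S | su = tv} is either empty or finitely generated as a subact of the right S-act S × S: there exist (u₁,v₁), …, (uₙ,vₙ) ∈ R(s,t) such that R(s,t) = {(uᵢc, vᵢc) | 1 ≤ i ≤ n, c ∈ S}. -/
/-!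
Were `R(s,t)` not finitely generated, `R(s,t)` together with the complements of the cyclic
subacts `(u,v)S`, `(u,v) ∈ R(s,t)`, would have the finite intersection property, hence lie in
one ultrafilter `Φ` on `S × S`. In the ultrapower indexed by `S × S`, the germs of the two
projections satisfy `s·[fst] = t·[snd]`, so condition (P) gives `(s',t') ∈ R(s,t)` and a germ
`[z]` with `fst = s'z` and `snd = t'z` `Φ`-almost everywhere: `Φ`-almost every point lies in
`(s',t')S`, a contradiction.
-/

universe u

/-- Condition (P) for a left `S`-act `B`. -/
def CondP (S : Type u) [Monoid S] (B : Type u) [MulAction S B] : Prop :=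
  ∀ (s t : S) (x y : B), s • x = t • y →
    ∃ (z : B) (s' t' : S), x = s' • z ∧ y = t' • z ∧ s * s' = t * t'

open Filter

theorem Ultrafilter.exists_finset_subset_biUnion {X : Type*} {R : Set X} {A : X → Set X}
    (h : ∀ Φ : Ultrafilter X, R ∈ Φ → ∃ q ∈ R, A q ∈ Φ) :
    ∃ F : Finset X, ↑F ⊆ R ∧ R ⊆ ⋃ q ∈ F, A q := by
  classical
  by_contra! hk
  have hfip : ∀ T : Finset (Set X), ↑T ⊆ insert R ((fun q => (A q)ᶜ) '' R) →
      (⋂₀ (↑T : Set (Set X))).Nonempty := by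
    intro T hT
    obtain ⟨F, hFR, hF⟩ : ∃ F : Finset X, ↑F ⊆ R ∧ F.image (fun q => (A q)ᶜ) = T.erase R := by
      refine Finset.subset_set_image_iff.mp ?_
      rw [Finset.coe_erase]
      exact Set.sdiff_singleton_subset_iff.mpr hT
    obtain ⟨p, hpR, hpA⟩ := Set.not_subset.mp (hk F hFR)
    refine ⟨p, fun u hu => ?_⟩
    rcases eq_or_ne u R with rfl | hne
    · exact hpR
    · obtain ⟨q, hqF, rfl⟩ := Finset.mem_image.mp (hF ▸ Finset.mem_erase.mpr ⟨hne, hu⟩)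
      exact fun hpq => hpA (Set.mem_biUnion hqF hpq)
  obtain ⟨Φ, hΦ⟩ := exists_ultrafilter_of_finite_inter_nonempty _ hfip
  obtain ⟨q, hqR, hqΦ⟩ := h Φ (hΦ (Set.mem_insert _ _))
  exact Φ.compl_notMem_iff.mpr hqΦ (hΦ (Set.mem_insert_of_mem _ ⟨q, hqR, rfl⟩))

theorem CondP.exists_eventually_eq {S : Type u} [Monoid S] {I : Type u} {l : Filter I}
    (hP : CondP S (Germ l S)) {s t : S} {u v : I → S} (huv : ∀ᶠ i in l, s * u i = t * v i) :
    ∃ (z : I → S) (s' t' : S), s * s' = t * t' ∧ ∀ᶠ i in l, u i = s' * z i ∧ v i = t' * z i := by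
  obtain ⟨z, s', t', hu, hv, hst⟩ := hP s t u v (by
    rw [← Germ.coe_smul, ← Germ.coe_smul, Germ.coe_eq]
    exact huv)
  induction z using Germ.inductionOn with
  | h z =>
  rw [← Germ.coe_smul, Germ.coe_eq] at hu hv
  exact ⟨z, s', t', hst, hu.and hv⟩

/-- if every ultrapower `S^I/Φ` of the left `S`-act `S` satisfies
condition (P), then for all `s, t ∈ S` the set `R(s,t) = {(u,v) | su = tv}` is
empty or finitely generated as a subact of the right `S`-act `S × S`:
`R(s,t) = {(uᵢc, vᵢc) | 1 ≤ i ≤ n, c ∈ S}` with each `(uᵢ,vᵢ) ∈ R(s,t)`. -/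
theorem stmt_5 {S : Type u} [Monoid S]
    (h : ∀ (I : Type u) (Φ : Ultrafilter I), CondP S (Filter.Germ (Φ : Filter I) S))
    (s t : S) :
    {p : S × S | s * p.1 = t * p.2} = ∅ ∨
    ∃ (n : ℕ) (w : Fin n → S × S),
      (∀ i, s * (w i).1 = t * (w i).2) ∧
      {p : S × S | s * p.1 = t * p.2} =
        {p : S × S | ∃ (i : Fin n) (c : S), p = ((w i).1 * c, (w i).2 * c)} := by
  set R := {p : S × S | s * p.1 = t * p.2}
  obtain ⟨F, hFR, hRF⟩ := Ultrafilter.exists_finset_subset_biUnion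
    (A := fun q => {p : S × S | ∃ c, p = (q.1 * c, q.2 * c)}) (R := R) fun Φ hR => by
      obtain ⟨z, s', t', hst, hz⟩ := (h _ Φ).exists_eventually_eq hR
      exact ⟨(s', t'), hst, hz.mono fun p hp => ⟨z p, Prod.ext hp.1 hp.2⟩⟩
  have hw : ∀ i, (F.equivFin.symm i : S × S) ∈ R := fun i => hFR (F.equivFin.symm i).2
  refine .inr ⟨F.card, fun i => F.equivFin.symm i, hw, ?_⟩
  ext p
  constructor
  · intro hp
    obtain ⟨q, hqF, c, rfl⟩ := Set.mem_iUnion₂.mp (hRF hp)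
    exact ⟨F.equivFin ⟨q, hqF⟩, c, by simp⟩
  · rintro ⟨i, c, rfl⟩
    show s * (_ * c) = t * (_ * c)
    rw [← mul_assoc, ← mul_assoc, hw i]
end

section
/- Let S be a monoid such that for every set I and every ultrafilter Φ on I, the ultrapower S^I/Φ of the left S-act S is projective. Then S satisfies condition (CFRS): for every s ∈ S there exists n ∈ ℕ such that for all t ∈ S the set {x ∈ S | sx = t} has at most n elements. -/
universe u

/-- A left `S`-act `P` is projective if every `S`-morphism from `P` to `N`
lifts along any surjective `S`-morphism `M → N`. -/
def IsProjectiveAct (S : Type u) [Monoid S] (P : Type u) [MulAction S P] : Prop :=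
  ∀ (M N : Type u) [MulAction S M] [MulAction S N] (φ : M → N) (θ : P → N),
    (∀ (s : S) (m : M), φ (s • m) = s • φ m) → Function.Surjective φ →
    (∀ (s : S) (p : P), θ (s • p) = s • θ p) →
    ∃ ψ : P → M, (∀ (s : S) (p : P), ψ (s • p) = s • ψ p) ∧ ∀ p, φ (ψ p) = θ p

/-- Auxiliary free-like act: a copy of `P × S` where `S` acts on the second
coordinate only. -/
structure FreeActAux (S P : Type u) : Type u where
  base : P
  sc : S

instance FreeActAux.instSMul {S P : Type u} [Monoid S] : SMul S (FreeActAux S P) :=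
  ⟨fun s m => ⟨m.base, s * m.sc⟩⟩

@[simp] lemma FreeActAux.smul_def {S P : Type u} [Monoid S] (s : S) (m : FreeActAux S P) :
    s • m = ⟨m.base, s * m.sc⟩ := rfl

instance FreeActAux.instMulAction {S P : Type u} [Monoid S] : MulAction S (FreeActAux S P) where
  one_smul m := by simp
  mul_smul x y m := by simp [mul_assoc]

/-- if every ultrapower `S^I/Φ` of the left `S`-act `S` is
projective, then `S` satisfies (CFRS): for every `s` there is `n` bounding the
number of solutions `x` of `s * x = t`, uniformly in `t`. -/
theorem stmt_6 {S : Type u} [Monoid S]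
    (h : ∀ (I : Type u) (Φ : Ultrafilter I), IsProjectiveAct S (Filter.Germ (Φ : Filter I) S)) :
    ∀ s : S, ∃ n : ℕ, ∀ t : S, {x : S | s * x = t}.encard ≤ (n : ℕ∞) := by
  classical
  intro s
  by_contra hc
  push_neg at hc
  -- Step 1: for every finite set `p` of subsets of `S`, choose `t p` with at
  -- least `p.card + 1` solutions of `s * x = t p`, enumerated injectively.
  have hchoice : ∀ p : Finset (Set S), ∃ (t : S) (f : Fin (p.card + 1) → S),
      Function.Injective f ∧ ∀ k, s * f k = t := by
    intro p
    obtain ⟨t, ht⟩ := hc p.card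
    have h1 : ((p.card + 1 : ℕ) : ℕ∞) ≤ {x : S | s * x = t}.encard := by
      push_cast
      exact Order.add_one_le_of_lt ht
    obtain ⟨t', ht's, ht'card⟩ := Set.exists_subset_encard_eq h1
    have ht'fin : t'.Finite := Set.finite_of_encard_le_coe ht'card.le
    have hcard : ht'fin.toFinset.card = p.card + 1 := by
      have h2 := ht'fin.encard_eq_coe_toFinset_card
      rw [ht'card] at h2
      exact_mod_cast h2.symm
    have hcard' : Fintype.card (↥ht'fin.toFinset) = p.card + 1 := by
      rw [Fintype.card_coe, hcard]
    let e := (Fintype.equivFinOfCardEq hcard').symm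
    refine ⟨t, fun k => (e k : S), ?_, ?_⟩
    · intro a b hab
      exact e.injective (Subtype.coe_injective hab)
    · intro k
      have hmem : ((e k : S)) ∈ t' := by
        have := (e k).2
        rwa [Set.Finite.mem_toFinset] at this
      exact ht's hmem
  choose t c hcinj hceq using hchoice
  -- Step 2: the ultrafilter on `Finset (Set S)` extending `atTop`.
  let Φ : Ultrafilter (Finset (Set S)) := Ultrafilter.of Filter.atTop
  have hE : ∀ A : Set S, ∀ᶠ p in (Φ : Filter (Finset (Set S))), A ∈ p := by
    intro A
    apply Ultrafilter.of_le Filter.atTop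
    have hsub : Set.Ici ({A} : Finset (Set S)) ⊆ {p | A ∈ p} := fun p hp =>
      hp (Finset.mem_singleton_self A)
    exact Filter.mem_of_superset (Filter.Ici_mem_atTop _) hsub
  set P := Filter.Germ (Φ : Filter (Finset (Set S))) S with hP
  -- Step 3: an injection of `Set S` into one fiber of the `s`-action on `P`.
  let eqp : ∀ p : Finset (Set S), {x // x ∈ p} ≃ Fin p.card := fun p =>
    Fintype.equivFinOfCardEq (Fintype.card_coe p)
  let F : Set S → Finset (Set S) → S := fun A p =>
    if hA : A ∈ p then c p ((eqp p ⟨A, hA⟩).castSucc) else c p 0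
  have hF : ∀ A p, s * F A p = t p := by
    intro A p
    by_cases hA : A ∈ p <;> simp [F, hA, hceq]
  let a : Set S → P := fun A => (F A : P)
  let τ : P := (t : P)
  have hsA : ∀ A : Set S, s • a A = τ := by
    intro A
    show s • ((F A : P)) = (t : P)
    rw [← Filter.Germ.coe_smul]
    apply Filter.Germ.coe_eq.mpr
    apply Filter.Eventually.of_forall
    intro p
    show s • F A p = t p
    rw [smul_eq_mul, hF]
  have hainj : Function.Injective a := by
    intro A B hab
    have h1 : ∀ᶠ p in (Φ : Filter (Finset (Set S))), F A p = F B p :=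
      Filter.Germ.coe_eq.mp hab
    obtain ⟨p, hFp, hA, hB⟩ := (h1.and ((hE A).and (hE B))).exists
    have hFA : F A p = c p ((eqp p ⟨A, hA⟩).castSucc) := by simp [F, hA]
    have hFB : F B p = c p ((eqp p ⟨B, hB⟩).castSucc) := by simp [F, hB]
    rw [hFA, hFB] at hFp
    have h2 := hcinj p hFp
    have h3 := Fin.castSucc_injective _ h2
    have h4 := (eqp p).injective h3
    exact Subtype.ext_iff.mp h4
  -- Step 4: projectivity gives a retraction onto a free act.
  obtain ⟨ψ, hψ1, hψ2⟩ := h (Finset (Set S)) Φ (FreeActAux S P) P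
    (fun m => m.sc • m.base) id
    (by
      intro u m
      show (u * m.sc) • m.base = u • (m.sc • m.base)
      rw [mul_smul])
    (fun q => ⟨⟨q, 1⟩, one_smul _ _⟩)
    (fun u q => rfl)
  have hbase : ∀ A : Set S, (ψ τ).base = (ψ (a A)).base := by
    intro A
    have h1 := hψ1 s (a A)
    rw [hsA A] at h1
    rw [h1]
    rfl
  -- Step 5: the resulting injection `Set S → S` contradicts Cantor.
  have hrec : ∀ A : Set S, a A = (ψ (a A)).sc • (ψ τ).base := by
    intro A
    have h2 := hψ2 (a A)
    rw [hbase A]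
    exact h2.symm
  have hginj : Function.Injective (fun A : Set S => (ψ (a A)).sc) := by
    intro A B hAB
    apply hainj
    rw [hrec A, hrec B]
    simpa using congrArg (· • (ψ τ).base) hAB
  exact Function.cantor_injective _ hginj
end

section
/- Let S be a monoid such that for every set I and every ultrafilter Φ on I, the ultrapower S^I/Φ of the left S-act S is projective. Then S satisfies condition (M_R): for every sequence (bₙ) in S with b₁S ⊇ b₂S ⊇ b₃S ⊇ ⋯, there exists N such that bₙS = b_N S for all n ≥ N. -/
/-!
A projective act `P` is a retract of a free act, which yields an `S`-map `e : P → S` with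
`p ∈ e p • P` for every `p`. Apply this to the germ `β` of the chain `(bₙ)` in an ultrapower
along a nonprincipal ultrafilter on `ℕ`. Every `b m` divides `bᵢ` for almost all `i`, so `β`
lies in `b m • P` and `e β ∈ b m S` for all `m`. On the other hand `β = e β • q` says that
`bᵢ ∈ (e β) S` for some `i`, and then `bᵢ S ⊆ (e β) S ⊆ bₙ S ⊆ bᵢ S` for all `n ≥ i`.
-/

universe u

def FreeAct (S X : Type u) : Type u := S × X

instance {S X : Type u} [Monoid S] : MulAction S (FreeAct S X) where
  smul s x := (s * x.1, x.2)
  one_smul x := Prod.ext (one_mul x.1) rfl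
  mul_smul s t x := Prod.ext (mul_assoc s t x.1) rfl

/-- A lift of the identity of `P` along the canonical epimorphism `FreeAct S P → P`. -/
theorem IsProjectiveAct.exists_smul_coeff {S P : Type u} [Monoid S] [MulAction S P]
    (hP : IsProjectiveAct S P) :
    ∃ e : P → S, (∀ (s : S) (p : P), e (s • p) = s * e p) ∧ ∀ p, ∃ q, e p • q = p := by
  obtain ⟨ψ, hψ, hψ_lift⟩ := hP (FreeAct S P) P (fun x => x.1 • x.2) id
    (fun s x => mul_smul s x.1 x.2) (fun p => ⟨((1 : S), p), one_smul S p⟩) (fun _ _ => rfl)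
  exact ⟨fun p => (ψ p).1, fun s p => congrArg Prod.fst (hψ s p), fun p => ⟨(ψ p).2, hψ_lift p⟩⟩

theorem range_mul_subset_range_mul_iff {S : Type*} [Monoid S] {a b : S} :
    Set.range (fun x => b * x) ⊆ Set.range (fun x => a * x) ↔ a ∣ b := by
  constructor
  · intro h
    obtain ⟨c, hc⟩ := h ⟨1, mul_one b⟩
    exact ⟨c, hc.symm⟩
  · rintro ⟨c, rfl⟩ _ ⟨x, rfl⟩
    exact ⟨c * x, (mul_assoc a c x).symm⟩

namespace Filter.Germ

variable {I S : Type*} [Monoid S] {l : Filter I}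

theorem exists_eq_smul_of_eventually_dvd [l.NeBot] {f : I → S} {a : S}
    (h : ∀ᶠ i in l, a ∣ f i) : ∃ g : l.Germ S, (f : l.Germ S) = a • g := by
  obtain ⟨c, hc⟩ := h.choice
  exact ⟨c, by rw [← coe_smul, coe_eq]; exact hc⟩

theorem eventually_eq_mul_of_coe_eq_smul {f g : I → S} {a : S}
    (h : (f : l.Germ S) = a • (g : l.Germ S)) : ∀ᶠ i in l, f i = a * g i := by
  rw [← coe_smul, coe_eq] at h
  exact h

end Filter.Germ

/-- if every ultrapower `S^I/Φ` of the left `S`-act `S` is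
projective, then `S` satisfies (M_R): every descending chain of principal
right ideals `b₁S ⊇ b₂S ⊇ ⋯` stabilizes. -/
theorem stmt_7 {S : Type u} [Monoid S]
    (h : ∀ (I : Type u) (Φ : Ultrafilter I), IsProjectiveAct S (Filter.Germ (Φ : Filter I) S))
    (b : ℕ → S)
    (hb : ∀ n : ℕ, Set.range (fun x => b (n + 1) * x) ⊆ Set.range (fun x => b n * x)) :
    ∃ N : ℕ, ∀ n ≥ N, Set.range (fun x => b n * x) = Set.range (fun x => b N * x) := by
  have hchain : ∀ ⦃m n⦄, m ≤ n → b m ∣ b n :=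
    Nat.rel_of_forall_rel_succ_of_le _ fun n => range_mul_subset_range_mul_iff.1 (hb n)
  let Φ := Filter.hyperfilter (ULift.{u} ℕ)
  obtain ⟨e, he_smul, he_coeff⟩ := (h _ Φ).exists_smul_coeff
  have hdvd_e : ∀ m, b m ∣ e (fun i : ULift ℕ => b i.down) := by
    intro m
    have hlarge : ∀ᶠ i : ULift ℕ in Φ, m ≤ i.down :=
      Filter.hyperfilter_le_cofinite <| ULift.down_injective.tendsto_cofinite.eventually <|
        Nat.cofinite_eq_atTop ▸ Filter.eventually_ge_atTop m
    obtain ⟨g, hg⟩ :=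
      Filter.Germ.exists_eq_smul_of_eventually_dvd (hlarge.mono fun _ hi => hchain hi)
    exact ⟨e g, by rw [hg, he_smul]⟩
  obtain ⟨q, hq⟩ := he_coeff (fun i : ULift ℕ => b i.down)
  induction q using Filter.Germ.inductionOn with | _ g => ?_
  obtain ⟨i, hi⟩ := (Filter.Germ.eventually_eq_mul_of_coe_eq_smul hq.symm).exists
  refine ⟨i.down, fun n hn => subset_antisymm (range_mul_subset_range_mul_iff.2 (hchain hn)) ?_⟩
  exact range_mul_subset_range_mul_iff.2 (hi ▸ (hdvd_e n).mul_right (g i))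
end

section
/- Let S be a monoid such that for every set I and every ultrafilter Φ on I, the ultrapower S^I/Φ of the left S-act S is projective. Then S satisfies condition (M^L): for every sequence (aₙ) in S with Sa₁ ⊆ Sa₂ ⊆ Sa₃ ⊆ ⋯, there exists N such that Saₙ = Sa_N for all n ≥ N. -/
/-!
A projective act splits its free cover `Σ _ : P, S → P`, `⟨p, t⟩ ↦ t • p`; the splitting yields a
map `g : P → P`, constant along the action, with every `p` a multiple of `g p`. So all elements `q`
with `s • q = z` for some `s` are multiples of the single element `g z`: there are at most `|S|`
of them.

Over an ultrafilter on `Finset S` that eventually contains every point, an infinite fibre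
`{v | u * v = c}` would give `2^|S|` germs `q` with `u • q = c`; hence every such fibre is finite.

If `a k = c k * a (k + 1)`, the germs `α k = [i ↦ c k * ⋯ * c (n i - 1)]` over an ultrafilter on
`ℕ` satisfy `α k = c k • α (k + 1)`, so all are multiples `u k • [r]` of one germ. Evaluating at
`a (n i)` gives `a k = u k * (r i * a (n i))` for almost all `i`; finiteness of the fibre of `u 0`
over `a 0` makes `r i * a (n i)` almost everywhere a constant `v₀`, and then
`S a k ⊆ S v₀ ⊆ S a (n i)` for all `k`, so the chain stabilises.
-/

universe u

open Filter Set

section Projective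

variable {S P : Type u} [Monoid S] [MulAction S P]

theorem IsProjectiveAct.exists_invariant_generator (hP : IsProjectiveAct S P) :
    ∃ (g : P → P) (w : P → S), (∀ (s : S) (p : P), g (s • p) = g p) ∧ ∀ p, w p • g p = p := by
  obtain ⟨ψ, hψ, hψφ⟩ := hP (Σ _ : P, S) P (fun x => x.2 • x.1) id
    (fun s x => mul_smul s x.2 x.1) (fun p => ⟨⟨p, 1⟩, one_smul S p⟩) (fun _ _ => rfl)
  exact ⟨fun p => (ψ p).1, fun p => (ψ p).2, fun s p => by simp only [hψ]; rfl, hψφ⟩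

theorem IsProjectiveAct.exists_generator_of_smul_eq (hP : IsProjectiveAct S P) (z : P) :
    ∃ ξ : P, ∀ (s : S) (q : P), s • q = z → ∃ w : S, w • ξ = q := by
  obtain ⟨g, w, hg, hw⟩ := hP.exists_invariant_generator
  exact ⟨g z, fun s q hq => ⟨w q, by rw [← hq, hg, hw]⟩⟩

end Projective

section SubsetCode

variable {α : Type*}

noncomputable def subsetCode (X : Set α) (p : Finset α) : ℕ :=
  open Classical in p.powerset.toList.idxOf (p.filter (· ∈ X))

theorem subsetCode_germ_injective {Φ : Ultrafilter (Finset α)}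
    (hΦ : ∀ x, ∀ᶠ p in (Φ : Filter (Finset α)), x ∈ p) :
    Function.Injective fun X : Set α => (subsetCode X : Germ (Φ : Filter (Finset α)) ℕ) := by
  classical
  intro X Y hXY
  ext x
  obtain ⟨p, hcode, hx⟩ := ((Germ.coe_eq.mp hXY).and (hΦ x)).exists
  have hfilter : p.filter (· ∈ X) = p.filter (· ∈ Y) := by
    refine (List.idxOf_inj ?_).mp hcode
    exact Finset.mem_toList.mpr (Finset.mem_powerset.mpr (Finset.filter_subset _ _))
  simpa [hx] using congrArg (x ∈ ·) hfilter

end SubsetCode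

theorem IsProjectiveAct.finite_setOf_mul_eq {S : Type u} [Monoid S] {Φ : Ultrafilter (Finset S)}
    (hΦ : ∀ x, ∀ᶠ p in (Φ : Filter (Finset S)), x ∈ p)
    (hP : IsProjectiveAct S (Germ (Φ : Filter (Finset S)) S)) (u c : S) :
    {v | u * v = c}.Finite := by
  by_contra hinf
  let v := Set.Infinite.natEmbedding _ hinf
  let germOf : Set S → Germ (Φ : Filter (Finset S)) S := fun X => ↑fun p => (v (subsetCode X p) : S)
  have hfiber : ∀ X, u • germOf X = ↑fun _ : Finset S => c := fun X => by
    rw [← Germ.coe_smul]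
    exact congrArg _ (funext fun p => (v (subsetCode X p)).2)
  obtain ⟨ξ, hξ⟩ := hP.exists_generator_of_smul_eq (↑fun _ : Finset S => c)
  choose W hW using fun X => hξ u (germOf X) (hfiber X)
  refine Function.cantor_injective W fun X Y hXY => subsetCode_germ_injective hΦ ?_
  have hgerm : germOf X = germOf Y := by rw [← hW, ← hW, hXY]
  exact Germ.coe_eq.mpr ((Germ.coe_eq.mp hgerm).mono fun p hp => v.injective (Subtype.ext hp))

section Chain

variable {S : Type u} [Monoid S]

def chainProd (c : ℕ → S) : ℕ → ℕ → S
  | 0, _ => 1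
  | j + 1, k => c k * chainProd c j (k + 1)

theorem chainProd_mul {c a : ℕ → S} (hc : ∀ k, c k * a (k + 1) = a k) (j k : ℕ) :
    chainProd c j k * a (k + j) = a k := by
  induction j generalizing k with
  | zero => rw [chainProd, one_mul, Nat.add_zero]
  | succ j ih =>
    rw [chainProd, mul_assoc, show k + (j + 1) = k + 1 + j by omega, ih, hc]

theorem range_mul_subset_of_mem {a b : S} (h : b ∈ range fun x => x * a) :
    (range fun x => x * b) ⊆ range fun x => x * a := by
  obtain ⟨x, rfl⟩ := h
  rintro _ ⟨y, rfl⟩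
  exact ⟨y * x, mul_assoc y x a⟩

theorem exists_range_mul_eq_of_isProjectiveAct_germ {I : Type u} {Φ : Ultrafilter I}
    (hP : IsProjectiveAct S (Germ (Φ : Filter I) S)) {n : I → ℕ} (hn : Tendsto n Φ atTop)
    {a : ℕ → S} (ha : ∀ k, (range fun x => x * a k) ⊆ range fun x => x * a (k + 1))
    (hfin : ∀ u, {v | u * v = a 0}.Finite) :
    ∃ N, ∀ k ≥ N, (range fun x => x * a k) = range fun x => x * a N := by
  choose c hc using fun k => ha k ⟨1, one_mul (a k)⟩
  let α : ℕ → Germ (Φ : Filter I) S := fun k => ↑fun i => chainProd c (n i - k) k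
  have hα : ∀ k, α k = c k • α (k + 1) := fun k => by
    rw [← Germ.coe_smul, Germ.coe_eq]
    filter_upwards [hn.eventually_ge_atTop (k + 1)] with i hi
    rw [show n i - k = n i - (k + 1) + 1 by omega]
    rfl
  have hα0 : ∀ k, ∃ d : S, d • α k = α 0 := fun k => by
    induction k with
    | zero => exact ⟨1, one_smul S _⟩
    | succ k ih =>
      obtain ⟨d, hd⟩ := ih
      exact ⟨d * c k, by rw [mul_smul, ← hα, hd]⟩
  obtain ⟨ξ, hξ⟩ := hP.exists_generator_of_smul_eq (α 0)
  obtain ⟨r, rfl⟩ := Quot.exists_rep ξ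
  choose u hu using fun k => (hα0 k).elim fun d hd => hξ d (α k) hd
  have hdiv : ∀ k, ∀ᶠ i in (Φ : Filter I), u k * (r i * a (n i)) = a k := fun k => by
    filter_upwards [Germ.coe_eq.mp (hu k), hn.eventually_ge_atTop k] with i hi hki
    rw [← mul_assoc, show u k * r i = chainProd c (n i - k) k from hi,
      ← chainProd_mul hc (n i - k) k, Nat.add_sub_cancel' hki]
  obtain ⟨v₀, -, hv₀⟩ := (Ultrafilter.eventually_exists_mem_iff (hfin (u 0))
      (P := fun v i => r i * a (n i) = v)).mp <|
    (hdiv 0).mono fun i hi => ⟨r i * a (n i), hi, rfl⟩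
  obtain ⟨i, hi⟩ := hv₀.exists
  have hmem : ∀ k, a k ∈ range fun x => x * v₀ := fun k => by
    obtain ⟨j, hj, hv⟩ := ((hdiv k).and hv₀).exists
    exact ⟨u k, hv ▸ hj⟩
  have hmono : Monotone fun k => range fun x => x * a k := monotone_nat_of_le_succ ha
  refine ⟨n i, fun k hk => (hmono hk).antisymm' ?_⟩
  exact (range_mul_subset_of_mem (hmem k)).trans (range_mul_subset_of_mem ⟨r i, hi⟩)

end Chain

/-- if every ultrapower `S^I/Φ` of the left `S`-act `S` is
projective, then `S` satisfies (M^L): every ascending chain of principal left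
ideals `Sa₁ ⊆ Sa₂ ⊆ ⋯` stabilizes. -/
theorem stmt_8 {S : Type u} [Monoid S]
    (h : ∀ (I : Type u) (Φ : Ultrafilter I), IsProjectiveAct S (Filter.Germ (Φ : Filter I) S))
    (a : ℕ → S)
    (ha : ∀ n : ℕ, Set.range (fun x => x * a n) ⊆ Set.range (fun x => x * a (n + 1))) :
    ∃ N : ℕ, ∀ n ≥ N, Set.range (fun x => x * a n) = Set.range (fun x => x * a N) := by
  classical
  let Φ : Ultrafilter (Finset S) := Ultrafilter.of atTop
  have hΦ : ∀ x : S, ∀ᶠ p in (Φ : Filter (Finset S)), x ∈ p :=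
    fun x => Ultrafilter.of_le _ <|
      (eventually_ge_atTop {x}).mono fun p hp => Finset.singleton_subset_iff.mp hp
  have hn : Tendsto ULift.down (hyperfilter (ULift.{u} ℕ) : Filter (ULift ℕ)) atTop :=
    (Nat.cofinite_eq_atTop ▸ ULift.down_injective.tendsto_cofinite).mono_left
      hyperfilter_le_cofinite
  exact exists_range_mul_eq_of_isProjectiveAct_germ (h _ _) hn ha
    fun u => (h _ _).finite_setOf_mul_eq hΦ u (a 0)
end

section
/- Let S be a monoid satisfying Condition (A) and condition (M_R) (by a theorem of Fountain, Isbell and Kilp these two conditions together are equivalent to S being left perfect). Then: (i) S is group bound, i.e. every a ∈ S has a power aⁿ (n ≥ 1) that is H-related to an idempotent of S; (ii) every minimal left ideal of S equals Se for some idempotent e, and every minimal right ideal of S equals eS for some idempotent e. -/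
universe u

/-- Condition (A): every left `S`-act satisfies the ascending chain condition
on cyclic subacts. -/
def CondA (S : Type u) [Monoid S] : Prop :=
  ∀ (A : Type u) [MulAction S A] (a : ℕ → A),
    (∀ n : ℕ, Set.range (fun s : S => s • a n) ⊆ Set.range (fun s : S => s • a (n + 1))) →
    ∃ N : ℕ, ∀ n ≥ N, Set.range (fun s : S => s • a n) = Set.range (fun s : S => s • a N)

/-- Condition (M_R): descending chains of principal right ideals stabilize. -/
def CondMR (S : Type u) [Monoid S] : Prop :=
  ∀ b : ℕ → S,
    (∀ n : ℕ, Set.range (fun x => b (n + 1) * x) ⊆ Set.range (fun x => b n * x)) →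
    ∃ N : ℕ, ∀ n ≥ N, Set.range (fun x => b n * x) = Set.range (fun x => b N * x)

def IsLeftIdeal {S : Type u} [Monoid S] (I : Set S) : Prop :=
  I.Nonempty ∧ ∀ s : S, ∀ x ∈ I, s * x ∈ I

def IsRightIdeal {S : Type u} [Monoid S] (I : Set S) : Prop :=
  I.Nonempty ∧ ∀ s : S, ∀ x ∈ I, x * s ∈ I

def IsMinimalLeftIdeal {S : Type u} [Monoid S] (I : Set S) : Prop :=
  IsLeftIdeal I ∧ ∀ J : Set S, IsLeftIdeal J → J ⊆ I → J = I

def IsMinimalRightIdeal {S : Type u} [Monoid S] (I : Set S) : Prop :=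
  IsRightIdeal I ∧ ∀ J : Set S, IsRightIdeal J → J ⊆ I → J = I

section Act
variable {S : Type u} [Monoid S]

/-- Relation underlying the colimit of `S → S → S → ⋯` with maps `x ↦ x*a`. -/
private def ER (a : S) (p q : ℕ × S) : Prop :=
  ∃ k : ℕ, p.2 * a ^ (q.1 + k) = q.2 * a ^ (p.1 + k)

private lemma ER_equiv (a : S) : Equivalence (ER a) := by
  constructor
  · intro p; exact ⟨0, rfl⟩
  · rintro p q ⟨k, h⟩; exact ⟨k, h.symm⟩
  · rintro p q r ⟨k, h1⟩ ⟨l, h2⟩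
    refine ⟨q.1 + k + l, ?_⟩
    have e1 : r.1 + (q.1 + k + l) = (q.1 + k) + (r.1 + l) := by omega
    have e2 : p.1 + (q.1 + k + l) = (q.1 + l) + (p.1 + k) := by omega
    calc p.2 * a ^ (r.1 + (q.1 + k + l))
        = p.2 * (a ^ (q.1 + k) * a ^ (r.1 + l)) := by rw [e1, pow_add]
      _ = (p.2 * a ^ (q.1 + k)) * a ^ (r.1 + l) := (mul_assoc _ _ _).symm
      _ = (q.2 * a ^ (p.1 + k)) * a ^ (r.1 + l) := by rw [h1]
      _ = q.2 * (a ^ (p.1 + k) * a ^ (r.1 + l)) := mul_assoc _ _ _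
      _ = q.2 * (a ^ (r.1 + l) * a ^ (p.1 + k)) := by rw [← pow_add, ← pow_add,
            show p.1 + k + (r.1 + l) = r.1 + l + (p.1 + k) by omega]
      _ = (q.2 * a ^ (r.1 + l)) * a ^ (p.1 + k) := (mul_assoc _ _ _).symm
      _ = (r.2 * a ^ (q.1 + l)) * a ^ (p.1 + k) := by rw [h2]
      _ = r.2 * a ^ (p.1 + (q.1 + k + l)) := by rw [mul_assoc, ← pow_add, ← e2]

private def erSetoid (a : S) : Setoid (ℕ × S) := ⟨ER a, ER_equiv a⟩

private def ActA (a : S) : Type u := Quotient (erSetoid a)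

private def ActA.mk (a : S) (p : ℕ × S) : ActA a := Quotient.mk (erSetoid a) p

instance (a : S) : MulAction S (ActA a) where
  smul s := Quotient.map (fun p => (p.1, s * p.2))
    (by rintro p q ⟨k, h⟩
        exact ⟨k, by simpa [mul_assoc] using congrArg (s * ·) h⟩)
  one_smul x := by
    refine Quotient.inductionOn x (fun p => ?_)
    show ActA.mk a (p.1, 1 * p.2) = ActA.mk a p
    rw [one_mul]
  mul_smul s t x := by
    refine Quotient.inductionOn x (fun p => ?_)
    show ActA.mk a (p.1, (s * t) * p.2) = ActA.mk a (p.1, s * (t * p.2))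
    rw [mul_assoc]

private lemma smul_mk (a s : S) (p : ℕ × S) :
    s • ActA.mk a p = ActA.mk a (p.1, s * p.2) := rfl

/-- Left π-regularity from Condition (A). -/
private lemma powL (hA : CondA S) (a : S) :
    ∃ k : ℕ, 1 ≤ k ∧ ∃ t : S, a ^ k = t * a ^ (k + 1) := by
  have chain : ∀ n : ℕ, Set.range (fun s : S => s • ActA.mk a (n, 1)) ⊆
      Set.range (fun s : S => s • ActA.mk a (n + 1, 1)) := by
    rintro n x ⟨s, hs⟩
    refine ⟨s * a, ?_⟩
    subst hs
    show (s * a) • ActA.mk a (n + 1, 1) = s • ActA.mk a (n, 1)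
    rw [smul_mk, smul_mk]
    refine Quotient.sound ⟨0, ?_⟩
    show (s * a * 1) * a ^ (n + 0) = (s * 1) * a ^ (n + 1 + 0)
    simp [mul_assoc, pow_succ']
  obtain ⟨N, hN⟩ := hA (ActA a) (fun n => ActA.mk a (n, 1)) chain
  have hmem : ActA.mk a (N + 1, 1) ∈
      Set.range (fun s : S => s • ActA.mk a (N, 1)) := by
    rw [← hN (N + 1) (Nat.le_succ N)]
    exact ⟨1, one_smul _ _⟩
  obtain ⟨t, ht⟩ := hmem
  have ht' : ActA.mk a (N, t * 1) = ActA.mk a (N + 1, 1) := ht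
  obtain ⟨k, hk⟩ : ER a (N, t * 1) (N + 1, 1) := Quotient.exact ht'
  -- hk : (t * 1) * a ^ ((N + 1) + k) = 1 * a ^ (N + k)
  simp only [mul_one, one_mul] at hk
  refine ⟨N + k + 1, Nat.le_add_left 1 (N + k), t, ?_⟩
  -- a ^ (N+k+1) = t * a ^ (N+k+2)
  calc a ^ (N + k + 1) = a ^ (N + k) * a := pow_succ a (N + k)
    _ = (t * a ^ (N + 1 + k)) * a := by rw [← hk]
    _ = t * (a ^ (N + 1 + k) * a) := mul_assoc _ _ _
    _ = t * a ^ (N + k + 1 + 1) := by rw [← pow_succ, show N + 1 + k + 1 = N + k + 1 + 1 by omega]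

/-- Right π-regularity from Condition (M_R). -/
private lemma powR (hMR : CondMR S) (a : S) :
    ∃ k : ℕ, 1 ≤ k ∧ ∃ u : S, a ^ k = a ^ (k + 1) * u := by
  have chain : ∀ n : ℕ, Set.range (fun x : S => a ^ (n + 1) * x) ⊆
      Set.range (fun x : S => a ^ n * x) := by
    rintro n x ⟨s, hs⟩
    exact ⟨a * s, by rw [← hs]; simp [pow_succ, mul_assoc]⟩
  obtain ⟨N, hN⟩ := hMR (fun n => a ^ n) chain
  have hmem : a ^ N ∈ Set.range (fun x : S => a ^ (N + 1) * x) := by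
    rw [hN (N + 1) (Nat.le_succ N)]
    exact ⟨1, mul_one _⟩
  obtain ⟨u, hu⟩ := hmem
  have hu' : a ^ (N + 1) * u = a ^ N := hu
  refine ⟨N + 1, Nat.le_add_left 1 N, u, ?_⟩
  calc a ^ (N + 1) = a * a ^ N := (pow_succ' a N)
    _ = a * (a ^ (N + 1) * u) := by rw [hu']
    _ = (a * a ^ (N + 1)) * u := (mul_assoc _ _ _).symm
    _ = a ^ (N + 1 + 1) * u := by rw [← pow_succ']

end Act

section Helpers
variable {S : Type u} [Monoid S]

private lemma shiftL {a t : S} {k n : ℕ} (h : a ^ k = t * a ^ (k+1)) (hkn : k ≤ n) :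
    a ^ n = t * a ^ (n+1) := by
  obtain ⟨d, rfl⟩ := Nat.exists_eq_add_of_le hkn
  calc a ^ (k + d) = a ^ k * a ^ d := pow_add a k d
    _ = (t * a ^ (k+1)) * a ^ d := by rw [h]
    _ = t * (a ^ (k+1) * a ^ d) := mul_assoc _ _ _
    _ = t * a ^ (k + d + 1) := by rw [← pow_add, show k + 1 + d = k + d + 1 by omega]

private lemma shiftR {a u : S} {k n : ℕ} (h : a ^ k = a ^ (k+1) * u) (hkn : k ≤ n) :
    a ^ n = a ^ (n+1) * u := by
  obtain ⟨d, rfl⟩ := Nat.exists_eq_add_of_le hkn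
  calc a ^ (k + d) = a ^ d * a ^ k := by rw [← pow_add, show d + k = k + d by omega]
    _ = a ^ d * (a ^ (k+1) * u) := by rw [h]
    _ = (a ^ d * a ^ (k+1)) * u := (mul_assoc _ _ _).symm
    _ = a ^ (k + d + 1) * u := by rw [← pow_add, show d + (k + 1) = k + d + 1 by omega]

private lemma iterL {a t : S} {k : ℕ} (h : a ^ k = t * a ^ (k+1)) :
    ∀ j : ℕ, a ^ k = t ^ j * a ^ (k + j) := by
  intro j
  induction j with
  | zero => simp
  | succ j ih =>
    have h2 : a ^ (k + j) = t * a ^ (k + j + 1) := shiftL h (Nat.le_add_right k j)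
    calc a ^ k = t ^ j * a ^ (k + j) := ih
      _ = t ^ j * (t * a ^ (k + j + 1)) := by rw [h2]
      _ = (t ^ j * t) * a ^ (k + j + 1) := (mul_assoc _ _ _).symm
      _ = t ^ (j+1) * a ^ (k + (j+1)) := by rw [pow_succ t j]; rfl

private lemma iterR {a u : S} {k : ℕ} (h : a ^ k = a ^ (k+1) * u) :
    ∀ j : ℕ, a ^ k = a ^ (k + j) * u ^ j := by
  intro j
  induction j with
  | zero => simp
  | succ j ih =>
    have h2 : a ^ (k + j) = a ^ (k + j + 1) * u := shiftR h (Nat.le_add_right k j)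
    calc a ^ k = a ^ (k + j) * u ^ j := ih
      _ = (a ^ (k + j + 1) * u) * u ^ j := by rw [h2]
      _ = a ^ (k + j + 1) * (u * u ^ j) := mul_assoc _ _ _
      _ = a ^ (k + (j+1)) * u ^ (j+1) := by rw [pow_succ' u j]; rfl

private lemma key {b t u : S} (ht : b = t * (b * b)) (hu : b = (b * b) * u) :
    ∃ e : S, e * e = e ∧ e * b = b ∧ b * e = b ∧ (∃ x, e = b * x) ∧ (∃ y, e = y * b) := by
  have h1 : t * b = b * u := by
    calc t * b = t * ((b * b) * u) := by rw [← hu]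
      _ = (t * (b * b)) * u := (mul_assoc _ _ _).symm
      _ = b * u := by rw [← ht]
  refine ⟨b * u, ?_, ?_, ?_, ⟨u, rfl⟩, ⟨t, h1.symm⟩⟩
  · calc (b * u) * (b * u) = (t * b) * (b * u) := by rw [h1]
      _ = t * (b * (b * u)) := mul_assoc _ _ _
      _ = t * ((b * b) * u) := by rw [mul_assoc]
      _ = t * b := by rw [← hu]
      _ = b * u := h1
  · calc (b * u) * b = (t * b) * b := by rw [h1]
      _ = t * (b * b) := mul_assoc _ _ _
      _ = b := ht.symm
  · calc b * (b * u) = (b * b) * u := (mul_assoc _ _ _).symm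
      _ = b := hu.symm

end Helpers


section Master
variable {S : Type u} [Monoid S]

private lemma master {a t u : S} {k m : ℕ} (hk : 1 ≤ k) (hm : 1 ≤ m)
    (hL : a ^ k = t * a ^ (k + 1)) (hR : a ^ m = a ^ (m + 1) * u) :
    ∃ n : ℕ, 1 ≤ n ∧ ∃ e : S,
      e * e = e ∧ e * a ^ n = a ^ n ∧ a ^ n * e = a ^ n ∧
      (∃ x, e = a ^ n * x) ∧ (∃ y, e = y * a ^ n) := by
  refine ⟨max k m, le_trans hk (le_max_left k m), ?_⟩
  set n := max k m with hn
  have hL' : a ^ n = t * a ^ (n + 1) := shiftL hL (le_max_left k m)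
  have hR' : a ^ n = a ^ (n + 1) * u := shiftR hR (le_max_right k m)
  have h1 : a ^ n = t ^ n * (a ^ n * a ^ n) := by
    have := iterL hL' n
    rwa [pow_add] at this
  have h2 : a ^ n = (a ^ n * a ^ n) * u ^ n := by
    have := iterR hR' n
    rwa [pow_add] at this
  exact key h1 h2

end Master

/-- a monoid satisfying Conditions (A) and (M_R) (i.e. a left
perfect monoid) is group bound, and its minimal left (right) ideals are
generated by idempotents. -/
theorem stmt_10 {S : Type u} [Monoid S] (hA : CondA S) (hMR : CondMR S) :
    (∀ a : S, ∃ n : ℕ, 1 ≤ n ∧ ∃ e : S, e * e = e ∧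
      Set.range (fun s => a ^ n * s) = Set.range (fun s => e * s) ∧
      Set.range (fun s => s * a ^ n) = Set.range (fun s => s * e)) ∧
    (∀ I : Set S, IsMinimalLeftIdeal I →
      ∃ e : S, e * e = e ∧ I = Set.range (fun s => s * e)) ∧
    (∀ I : Set S, IsMinimalRightIdeal I →
      ∃ e : S, e * e = e ∧ I = Set.range (fun s => e * s)) := by
  refine ⟨?_, ?_, ?_⟩
  · -- (i) group bound
    intro a
    obtain ⟨k, hk1, t, hL⟩ := powL hA a
    obtain ⟨m, hm1, u, hR⟩ := powR hMR a
    obtain ⟨n, hn1, e, he, heb, hbe, ⟨x, hx⟩, ⟨y, hy⟩⟩ := master hk1 hm1 hL hR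
    refine ⟨n, hn1, e, he, ?_, ?_⟩
    · ext z
      constructor
      · rintro ⟨s, rfl⟩
        exact ⟨a ^ n * s, show e * (a ^ n * s) = a ^ n * s by rw [← mul_assoc, heb]⟩
      · rintro ⟨s, rfl⟩
        exact ⟨x * s, show a ^ n * (x * s) = e * s by rw [← mul_assoc, ← hx]⟩
    · ext z
      constructor
      · rintro ⟨s, rfl⟩
        exact ⟨s * a ^ n, show (s * a ^ n) * e = s * a ^ n by rw [mul_assoc, hbe]⟩
      · rintro ⟨s, rfl⟩
        exact ⟨s * y, show (s * y) * a ^ n = s * e by rw [mul_assoc, ← hy]⟩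
  · -- (ii) minimal left ideals
    intro I hI
    obtain ⟨⟨⟨a, ha⟩, hclosed⟩, hmin⟩ := hI
    have hSa : Set.range (fun s : S => s * a) = I := by
      apply hmin
      · refine ⟨⟨a, ⟨1, one_mul a⟩⟩, ?_⟩
        rintro s x ⟨r, rfl⟩
        exact ⟨s * r, by simp [mul_assoc]⟩
      · rintro z ⟨s, rfl⟩
        exact hclosed s a ha
    have haa : a * a ∈ I := hclosed a a ha
    have hSaa : Set.range (fun s : S => s * (a * a)) = I := by
      apply hmin
      · refine ⟨⟨a * a, ⟨1, one_mul _⟩⟩, ?_⟩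
        rintro s x ⟨r, rfl⟩
        exact ⟨s * r, by simp [mul_assoc]⟩
      · rintro z ⟨s, rfl⟩
        exact hclosed s _ haa
    have hamem : a ∈ Set.range (fun s : S => s * (a * a)) := by rw [hSaa]; exact ha
    obtain ⟨t, ht0⟩ := hamem
    have ht0' : t * (a * a) = a := ht0
    have hL : a ^ 1 = t * a ^ (1 + 1) := by
      rw [pow_one]
      rw [show (1 : ℕ) + 1 = 2 by norm_num, pow_two]
      exact ht0'.symm
    obtain ⟨m, hm1, u, hR⟩ := powR hMR a
    obtain ⟨n, hn1, e, he, heb, hbe, ⟨x, hx⟩, ⟨y, hy⟩⟩ := master le_rfl hm1 hL hR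
    have haan : a = t ^ (n - 1) * a ^ n := by
      have := iterL hL (n - 1)
      rwa [pow_one, show 1 + (n - 1) = n by omega] at this
    have hae : a * e = a := by
      calc a * e = (t ^ (n - 1) * a ^ n) * e := by rw [← haan]
        _ = t ^ (n - 1) * (a ^ n * e) := mul_assoc _ _ _
        _ = t ^ (n - 1) * a ^ n := by rw [hbe]
        _ = a := haan.symm
    have hea : e = (y * a ^ (n - 1)) * a := by
      rw [hy, mul_assoc, ← pow_succ, show n - 1 + 1 = n by omega]
    refine ⟨e, he, ?_⟩
    rw [← hSa]
    ext z
    constructor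
    · rintro ⟨s, rfl⟩
      exact ⟨s * a, show (s * a) * e = s * a by rw [mul_assoc, hae]⟩
    · rintro ⟨s, rfl⟩
      exact ⟨s * (y * a ^ (n - 1)),
        show (s * (y * a ^ (n - 1))) * a = s * e by rw [mul_assoc, ← hea]⟩
  · -- (ii) minimal right ideals
    intro I hI
    obtain ⟨⟨⟨a, ha⟩, hclosed⟩, hmin⟩ := hI
    have hSa : Set.range (fun s : S => a * s) = I := by
      apply hmin
      · refine ⟨⟨a, ⟨1, mul_one a⟩⟩, ?_⟩
        rintro s x ⟨r, rfl⟩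
        exact ⟨r * s, by simp [mul_assoc]⟩
      · rintro z ⟨s, rfl⟩
        exact hclosed s a ha
    have haa : a * a ∈ I := hclosed a a ha
    have hSaa : Set.range (fun s : S => (a * a) * s) = I := by
      apply hmin
      · refine ⟨⟨a * a, ⟨1, mul_one _⟩⟩, ?_⟩
        rintro s x ⟨r, rfl⟩
        exact ⟨r * s, by simp [mul_assoc]⟩
      · rintro z ⟨s, rfl⟩
        exact hclosed s _ haa
    have hamem : a ∈ Set.range (fun s : S => (a * a) * s) := by rw [hSaa]; exact ha
    obtain ⟨u, hu0⟩ := hamem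
    have hu0' : (a * a) * u = a := hu0
    have hR : a ^ 1 = a ^ (1 + 1) * u := by
      rw [pow_one]
      rw [show (1 : ℕ) + 1 = 2 by norm_num, pow_two]
      exact hu0'.symm
    obtain ⟨k, hk1, t, hL⟩ := powL hA a
    obtain ⟨n, hn1, e, he, heb, hbe, ⟨x, hx⟩, ⟨y, hy⟩⟩ := master hk1 le_rfl hL hR
    have haan : a = a ^ n * u ^ (n - 1) := by
      have := iterR hR (n - 1)
      rwa [pow_one, show 1 + (n - 1) = n by omega] at this
    have hea : e * a = a := by
      calc e * a = e * (a ^ n * u ^ (n - 1)) := by rw [← haan]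
        _ = (e * a ^ n) * u ^ (n - 1) := (mul_assoc _ _ _).symm
        _ = a ^ n * u ^ (n - 1) := by rw [heb]
        _ = a := haan.symm
    have hax : e = a * (a ^ (n - 1) * x) := by
      rw [hx, ← mul_assoc, ← pow_succ', show n - 1 + 1 = n by omega]
    refine ⟨e, he, ?_⟩
    rw [← hSa]
    ext z
    constructor
    · rintro ⟨s, rfl⟩
      exact ⟨a * s, show e * (a * s) = a * s by rw [← mul_assoc, hea]⟩
    · rintro ⟨s, rfl⟩
      exact ⟨(a ^ (n - 1) * x) * s,
        show a * ((a ^ (n - 1) * x) * s) = e * s by rw [← mul_assoc, ← hax]⟩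
end

section
/- Let S be a monoid satisfying Condition (A) and condition (M_R) (by a theorem of Fountain, Isbell and Kilp these two conditions together are equivalent to S being left perfect). Then: (i) for b ∈ S, if Sb is a minimal left ideal of S then bS is a minimal right ideal of S, and if bS is a minimal right ideal then Sb is a minimal left ideal; (ii) for b₀, b₁ ∈ S, if Sb₁ ⊆ Sb₀ and there exists an S-isomorphism from the left S-act Sb₀ onto the left S-act Sb₁ (a bijection φ with φ(s·m) = s·φ(m) for all s ∈ S, m ∈ Sb₀), then Sb₀ = Sb₁. -/
universe u

section StmtElevenHelpers

variable {S : Type u} [Monoid S]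

private lemma stmt11_idem_pack (a x y : S) (hx : a = x * (a * a)) (hy : a = (a * a) * y) :
    ∃ e : S, e * e = e ∧ e * a = a ∧ a * e = a ∧ (∃ p, e = p * a) ∧ (∃ q, e = a * q) := by
  have hxy : x * a = a * y := by
    calc x * a = x * ((a * a) * y) := by rw [← hy]
    _ = (x * (a * a)) * y := (mul_assoc _ _ _).symm
    _ = a * y := by rw [← hx]
  have hea : (x * a) * a = a := by rw [mul_assoc, ← hx]
  have hae : a * (x * a) = a := by rw [hxy, ← mul_assoc, ← hy]
  exact ⟨x * a, by rw [mul_assoc, hae], hea, hae, ⟨x, rfl⟩, ⟨y, hxy⟩⟩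

private lemma stmt11_iterate_mul_right (b : S) :
    ∀ (j : ℕ) (x : S), (fun m => m * b)^[j] x = x * b ^ j := by
  intro j
  induction j with
  | zero => intro x; simp
  | succ n ih =>
      intro x
      rw [Function.iterate_succ_apply, ih, mul_assoc, ← pow_succ']

private lemma stmt11_pow_iter_left (b : S) (K : ℕ)
    (h : ∀ k, K ≤ k → ∃ z, b ^ (k + 1) = z * b ^ (k + 2)) :
    ∀ i, ∃ x, b ^ (K + 1) = x * b ^ (K + 1 + i) := by
  intro i
  induction i with
  | zero => exact ⟨1, by rw [one_mul]⟩
  | succ i ih =>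
      obtain ⟨x, hx⟩ := ih
      obtain ⟨z, hz⟩ := h (K + i) (Nat.le_add_right _ _)
      refine ⟨x * z, ?_⟩
      have e1 : K + 1 + i = K + i + 1 := by omega
      have e2 : K + 1 + (i + 1) = K + i + 2 := by omega
      rw [e2, hx, e1, hz, mul_assoc]

private lemma stmt11_pow_iter_right (b : S) (K : ℕ)
    (h : ∀ k, K ≤ k → ∃ z, b ^ (k + 1) = b ^ (k + 2) * z) :
    ∀ i, ∃ y, b ^ (K + 1) = b ^ (K + 1 + i) * y := by
  intro i
  induction i with
  | zero => exact ⟨1, by rw [mul_one]⟩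
  | succ i ih =>
      obtain ⟨x, hx⟩ := ih
      obtain ⟨z, hz⟩ := h (K + i) (Nat.le_add_right _ _)
      refine ⟨z * x, ?_⟩
      have e1 : K + 1 + i = K + i + 1 := by omega
      have e2 : K + 1 + (i + 1) = K + i + 2 := by omega
      rw [e2, hx, e1, hz, mul_assoc]

private lemma stmt11_mr_pow (hMR : CondMR S) (b : S) :
    ∃ K, ∀ k, K ≤ k → ∃ z, b ^ (k + 1) = b ^ (k + 2) * z := by
  have hchain : ∀ n : ℕ, Set.range (fun x => b ^ (n + 1 + 1) * x) ⊆
      Set.range (fun x => b ^ (n + 1) * x) := by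
    rintro n y ⟨t, rfl⟩
    refine ⟨b * t, ?_⟩
    show b ^ (n + 1) * (b * t) = b ^ (n + 1 + 1) * t
    rw [← mul_assoc, ← pow_succ]
  obtain ⟨N, hN⟩ := hMR (fun n => b ^ (n + 1)) hchain
  refine ⟨N, fun k hk => ?_⟩
  have h1 := hN k hk
  have h2 := hN (k + 1) (le_trans hk (Nat.le_succ _))
  have hmem : b ^ (k + 1) ∈ Set.range (fun x => b ^ (k + 1 + 1) * x) := by
    rw [h2, ← h1]
    exact ⟨1, mul_one _⟩
  obtain ⟨z, hz⟩ := hmem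
  exact ⟨z, hz.symm⟩

private lemma stmt11_condA_key (hA : CondA S) (b₀ : S) (φ : S → S)
    (hmap : ∀ m : S, (∃ x, x * b₀ = m) → ∃ x, x * b₀ = φ m)
    (heq : ∀ (s m : S), (∃ x, x * b₀ = m) → φ (s * m) = s * φ m) :
    ∃ (j : ℕ) (s : S), φ^[j] (φ (s * b₀)) = φ^[j] b₀ := by
  classical
  set r : (ℕ × S) → (ℕ × S) → Prop :=
    fun p q => (∃ x, x * b₀ = p.2) ∧ q = (p.1 + 1, φ p.2) with hrdef
  have hresp : ∀ (s : S) (p q : ℕ × S), r p q →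
      Quot.mk r (p.1, s * p.2) = Quot.mk r (q.1, s * q.2) := by
    rintro s p q ⟨⟨x, hx⟩, hq⟩
    apply Quot.sound
    refine ⟨⟨s * x, by rw [mul_assoc, hx]⟩, ?_⟩
    rw [hq]
    have : φ (s * p.2) = s * φ p.2 := heq s p.2 ⟨x, hx⟩
    simp [this]
  letI : SMul S (Quot r) :=
    ⟨fun s => Quot.lift (fun p => Quot.mk r (p.1, s * p.2)) (fun p q h => hresp s p q h)⟩
  have smul_mk : ∀ (s : S) (p : ℕ × S), s • (Quot.mk r p) = Quot.mk r (p.1, s * p.2) :=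
    fun _ _ => rfl
  letI : MulAction S (Quot r) :=
    { one_smul := by
        intro q
        induction q using Quot.ind with
        | _ p =>
          show Quot.mk r (p.1, 1 * p.2) = Quot.mk r p
          rw [one_mul]
      mul_smul := by
        intro s t q
        induction q using Quot.ind with
        | _ p =>
          show Quot.mk r (p.1, (s * t) * p.2) = Quot.mk r (p.1, s * (t * p.2))
          rw [mul_assoc] }
  set a : ℕ → Quot r := fun n => Quot.mk r (n, b₀) with hadef
  have hchain : ∀ n : ℕ, Set.range (fun s : S => s • a n) ⊆ Set.range (fun s : S => s • a (n + 1)) := by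
    rintro n y ⟨s, hs⟩
    obtain ⟨x, hx⟩ := hmap b₀ ⟨1, one_mul b₀⟩
    refine ⟨s * x, ?_⟩
    rw [← hs]
    show Quot.mk r (n + 1, (s * x) * b₀) = Quot.mk r (n, s * b₀)
    have h1 : Quot.mk r (n, s * b₀) = Quot.mk r (n + 1, φ (s * b₀)) :=
      Quot.sound ⟨⟨s, rfl⟩, rfl⟩
    rw [h1, heq s b₀ ⟨1, one_mul b₀⟩, ← hx, ← mul_assoc]
  obtain ⟨N, hN⟩ := hA (Quot r) a hchain
  have hmem : a (N + 1) ∈ Set.range (fun s : S => s • a N) := by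
    rw [← hN (N + 1) (Nat.le_succ N)]
    exact ⟨1, one_smul _ _⟩
  obtain ⟨s, hs⟩ := hmem
  have hqeq : Quot.mk r (N, s * b₀) = Quot.mk r (N + 1, b₀) := hs
  have hEG : Relation.EqvGen r (N, s * b₀) (N + 1, b₀) := Quot.eq.mp hqeq
  have glue : ∀ (k k' n : ℕ) (x : S), n ≤ k → k ≤ k' →
      φ^[k' - n] x = φ^[k' - k] (φ^[k - n] x) := by
    intro k k' n x h1 h2
    rw [← Function.iterate_add_apply]
    congr 1
    omega
  have inv : ∀ p q : ℕ × S, Relation.EqvGen r p q → p = q ∨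
      ∃ k, p.1 ≤ k ∧ q.1 ≤ k ∧ (∃ x, x * b₀ = p.2) ∧ (∃ x, x * b₀ = q.2) ∧
        φ^[k - p.1] p.2 = φ^[k - q.1] q.2 := by
    intro p q h
    induction h with
    | rel p q hpq =>
        right
        obtain ⟨hxp, hq⟩ := hpq
        refine ⟨p.1 + 1, Nat.le_succ _, le_of_eq (by rw [hq]), hxp, ?_, ?_⟩
        · rw [hq]; exact hmap _ hxp
        · rw [hq]
          have e1 : p.1 + 1 - p.1 = 1 := by omega
          simp only [e1, Nat.sub_self, Function.iterate_one, Function.iterate_zero, id]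
    | refl p => left; rfl
    | symm p q _ ih =>
        rcases ih with h | ⟨k, h1, h2, h3, h4, h5⟩
        · left; exact h.symm
        · right; exact ⟨k, h2, h1, h4, h3, h5.symm⟩
    | trans p q u _ _ ih1 ih2 =>
        rcases ih1 with h | ⟨k₁, a1, a2, a3, a4, a5⟩
        · rw [h]; exact ih2
        rcases ih2 with h | ⟨k₂, c1, c2, c3, c4, c5⟩
        · rw [← h]; right; exact ⟨k₁, a1, a2, a3, a4, a5⟩
        right
        refine ⟨max k₁ k₂, le_trans a1 (le_max_left _ _), le_trans c2 (le_max_right _ _),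
          a3, c4, ?_⟩
        calc φ^[max k₁ k₂ - p.1] p.2
            = φ^[max k₁ k₂ - k₁] (φ^[k₁ - p.1] p.2) := glue k₁ _ _ _ a1 (le_max_left _ _)
          _ = φ^[max k₁ k₂ - k₁] (φ^[k₁ - q.1] q.2) := by rw [a5]
          _ = φ^[max k₁ k₂ - q.1] q.2 := (glue k₁ _ _ _ a2 (le_max_left _ _)).symm
          _ = φ^[max k₁ k₂ - k₂] (φ^[k₂ - q.1] q.2) := glue k₂ _ _ _ c1 (le_max_right _ _)
          _ = φ^[max k₁ k₂ - k₂] (φ^[k₂ - u.1] u.2) := by rw [c5]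
          _ = φ^[max k₁ k₂ - u.1] u.2 := (glue k₂ _ _ _ c2 (le_max_right _ _)).symm
  rcases inv _ _ hEG with heq' | ⟨k, hk1, hk2, _, _, hiter⟩
  · exact absurd (congrArg Prod.fst heq') (by simp)
  · refine ⟨k - (N + 1), s, ?_⟩
    have e1 : k - N = (k - (N + 1)) + 1 := by omega
    simp only at hiter
    rw [e1, Function.iterate_succ_apply] at hiter
    exact hiter
private lemma stmt11_condA_pow (hA : CondA S) (b : S) :
    ∃ K, ∀ k, K ≤ k → ∃ z, b ^ (k + 1) = z * b ^ (k + 2) := by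
  obtain ⟨j, s, hjs⟩ := stmt11_condA_key hA b (fun m => m * b)
    (fun m _ => ⟨m, rfl⟩) (fun s m _ => mul_assoc s m b)
  rw [stmt11_iterate_mul_right, stmt11_iterate_mul_right] at hjs
  have hjs' : (s * b * b) * b ^ j = b * b ^ j := hjs
  have hbase : b ^ (j + 1) = s * b ^ (j + 2) := by
    calc b ^ (j + 1) = b * b ^ j := pow_succ' b j
      _ = s * b * b * b ^ j := hjs'.symm
      _ = s * (b * (b * b ^ j)) := by rw [mul_assoc, mul_assoc]
      _ = s * (b * b ^ (j + 1)) := by rw [← pow_succ']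
      _ = s * b ^ (j + 2) := by rw [← pow_succ']
  refine ⟨j, fun k hk => ?_⟩
  obtain ⟨d, rfl⟩ : ∃ d, k = j + d := ⟨k - j, by omega⟩
  refine ⟨s, ?_⟩
  have e1 : j + d + 1 = (j + 1) + d := by omega
  have e2 : j + d + 2 = (j + 2) + d := by omega
  rw [e1, e2, pow_add b (j + 1) d, pow_add b (j + 2) d, hbase, mul_assoc]

private lemma stmt11_rinv_of_linv (e : S) (he : e * e = e)
    (h : ∀ s : S, ∃ w : S, (e * w * e) * (e * s * e) = e) :
    ∀ s : S, ∃ g : S, (e * s * e) * (e * g * e) = e := by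
  intro s
  obtain ⟨w, hw⟩ := h s
  obtain ⟨v, hv⟩ := h w
  have heL : ∀ t : S, e * (e * t) = e * t := fun t => by rw [← mul_assoc, he]
  have key : e * s * e = e * v * e := by
    calc e * s * e = e * (s * e) := mul_assoc _ _ _
      _ = e * (e * (s * e)) := (heL _).symm
      _ = e * (e * s * e) := by rw [← mul_assoc e s e]
      _ = ((e * v * e) * (e * w * e)) * (e * s * e) := by rw [hv]
      _ = (e * v * e) * ((e * w * e) * (e * s * e)) := mul_assoc _ _ _
      _ = (e * v * e) * e := by rw [hw]
      _ = (e * v) * (e * e) := mul_assoc _ _ _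
      _ = e * v * e := by rw [he]
  exact ⟨w, by rw [key, hv]⟩

private lemma stmt11_linv_of_rinv (e : S) (he : e * e = e)
    (h : ∀ s : S, ∃ w : S, (e * s * e) * (e * w * e) = e) :
    ∀ s : S, ∃ g : S, (e * g * e) * (e * s * e) = e := by
  intro s
  obtain ⟨w, hw⟩ := h s
  obtain ⟨v, hv⟩ := h w
  have heL : ∀ t : S, e * (e * t) = e * t := fun t => by rw [← mul_assoc, he]
  have key : e * s * e = e * v * e := by
    calc e * s * e = (e * s) * (e * e) := by rw [he]
      _ = ((e * s) * e) * e := (mul_assoc _ _ _).symm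
      _ = (e * s * e) * ((e * w * e) * (e * v * e)) := by rw [hv]
      _ = ((e * s * e) * (e * w * e)) * (e * v * e) := (mul_assoc _ _ _).symm
      _ = e * (e * v * e) := by rw [hw]
      _ = e * (e * (v * e)) := by rw [mul_assoc e v e]
      _ = e * (v * e) := heL _
      _ = e * v * e := (mul_assoc _ _ _).symm
  exact ⟨w, by rw [key, hv]⟩

end StmtElevenHelpers

/-- in a monoid satisfying (A) and (M_R) (a left perfect monoid):
(i) `Sb` is a minimal left ideal iff-wise transfers to `bS` being a minimal
right ideal, in both directions; (ii) if `Sb₁ ⊆ Sb₀` and the left `S`-acts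
`Sb₀` and `Sb₁` are `S`-isomorphic, then `Sb₀ = Sb₁`. -/
theorem stmt_11 {S : Type u} [Monoid S] (hA : CondA S) (hMR : CondMR S) :
    (∀ b : S,
      (IsMinimalLeftIdeal (Set.range (fun s => s * b)) →
        IsMinimalRightIdeal (Set.range (fun s => b * s))) ∧
      (IsMinimalRightIdeal (Set.range (fun s => b * s)) →
        IsMinimalLeftIdeal (Set.range (fun s => s * b)))) ∧
    (∀ b0 b1 : S,
      Set.range (fun s => s * b1) ⊆ Set.range (fun s => s * b0) →
      (∃ φ : S → S,
        Set.BijOn φ (Set.range (fun s => s * b0)) (Set.range (fun s => s * b1)) ∧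
        ∀ s : S, ∀ m ∈ Set.range (fun x => x * b0), φ (s * m) = s * φ m) →
      Set.range (fun s => s * b0) = Set.range (fun s => s * b1)) := by
  constructor
  · intro b
    constructor
    · -- minimal left → minimal right
      intro hmin
      have hSc' : ∀ c : S, (∃ w : S, w * b = c) → ∀ d : S, (∃ w : S, w * b = d) →
          ∃ v : S, v * c = d := by
        rintro c ⟨w, hw⟩ d hd
        have hJ : IsLeftIdeal (Set.range fun s => s * c) :=
          ⟨⟨c, 1, one_mul c⟩, by rintro s x' ⟨t, rfl⟩; exact ⟨s * t, mul_assoc s t c⟩⟩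
        have hsub2 : (Set.range fun s => s * c) ⊆ Set.range fun s => s * b := by
          rintro x' ⟨t, rfl⟩
          refine ⟨t * w, ?_⟩
          show (t * w) * b = t * c
          rw [mul_assoc, hw]
        have hEq := hmin.2 _ hJ hsub2
        have hd' : d ∈ Set.range fun s => s * b := hd
        rw [← hEq] at hd'
        exact hd'
      have hleft : ∀ k : ℕ, ∃ z, b ^ (k + 1) = z * b ^ (k + 2) := by
        intro k
        obtain ⟨v, hv⟩ := hSc' (b ^ (k + 2)) ⟨b ^ (k + 1), (pow_succ b (k + 1)).symm⟩
          b ⟨1, one_mul b⟩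
        exact ⟨b ^ k * v, by rw [mul_assoc, hv, ← pow_succ]⟩
      obtain ⟨K, hright⟩ := stmt11_mr_pow hMR b
      obtain ⟨x, hx⟩ := stmt11_pow_iter_left b K (fun k _ => hleft k) (K + 1)
      obtain ⟨y, hy⟩ := stmt11_pow_iter_right b K hright (K + 1)
      have hpow2 : b ^ (K + 1 + (K + 1)) = b ^ (K + 1) * b ^ (K + 1) := pow_add b _ _
      rw [hpow2] at hx hy
      obtain ⟨e, hee, hea, hae, ⟨p, hp⟩, ⟨q, hq⟩⟩ := stmt11_idem_pack (b ^ (K + 1)) x y hx hy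
      have hbK : b ^ K * b = b ^ (K + 1) := (pow_succ b K).symm
      have hbe : b * e = b := by
        obtain ⟨v, hv⟩ := hSc' (b ^ (K + 1)) ⟨b ^ K, hbK⟩ b ⟨1, one_mul b⟩
        rw [← hv, mul_assoc, hae]
      have heSb : ∃ w : S, w * b = e := ⟨p * b ^ K, by rw [mul_assoc, hbK, ← hp]⟩
      have hlinv : ∀ t : S, ∃ w : S, (e * w * e) * (e * t * e) = e := by
        intro t
        obtain ⟨w0, hw0⟩ := id heSb
        have hese : ∃ w : S, w * b = e * t * e := ⟨e * t * w0, by rw [mul_assoc, hw0]⟩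
        obtain ⟨v, hv⟩ := hSc' (e * t * e) hese e heSb
        refine ⟨v, ?_⟩
        calc (e * v * e) * (e * t * e) = (e * v) * (e * (e * t * e)) := by
              rw [mul_assoc (e * v) e (e * t * e)]
          _ = (e * v) * (e * t * e) := by
              rw [show e * (e * t * e) = e * t * e from by
                rw [← mul_assoc, ← mul_assoc, hee]]
          _ = e * (v * (e * t * e)) := mul_assoc _ _ _
          _ = e * e := by rw [hv]
          _ = e := hee
      have hrinv := stmt11_rinv_of_linv e hee hlinv
      constructor
      · exact ⟨⟨b, 1, mul_one b⟩, by rintro s x' ⟨t, rfl⟩; exact ⟨t * s, (mul_assoc b t s).symm⟩⟩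
      · intro J hJ hJsub
        obtain ⟨⟨d, hd⟩, hJr⟩ := hJ
        obtain ⟨t, ht⟩ := hJsub hd
        obtain ⟨g, hg⟩ := hrinv t
        have hkey : d * (e * (e * g * e)) = b := by
          rw [← ht]
          calc (b * t) * (e * (e * g * e)) = b * (t * (e * (e * g * e))) := mul_assoc _ _ _
            _ = (b * e) * (t * (e * (e * g * e))) := by rw [hbe]
            _ = b * (e * (t * (e * (e * g * e)))) := mul_assoc _ _ _
            _ = b * ((e * t) * (e * (e * g * e))) := by rw [← mul_assoc e t (e * (e * g * e))]
            _ = b * (((e * t) * e) * (e * g * e)) := by rw [← mul_assoc (e * t) e (e * g * e)]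
            _ = b * e := by rw [hg]
            _ = b := hbe
        apply Set.Subset.antisymm hJsub
        rintro x0 ⟨u, rfl⟩
        show b * u ∈ J
        have hrw : b * u = d * ((e * (e * g * e)) * u) := by rw [← mul_assoc, hkey]
        rw [hrw]
        exact hJr _ d hd
    · -- minimal right → minimal left
      intro hmin
      have hCS' : ∀ c : S, (∃ w : S, b * w = c) → ∀ d : S, (∃ w : S, b * w = d) →
          ∃ v : S, c * v = d := by
        rintro c ⟨w, hw⟩ d hd
        have hJ : IsRightIdeal (Set.range fun s => c * s) :=
          ⟨⟨c, 1, mul_one c⟩, by rintro s x' ⟨t, rfl⟩; exact ⟨t * s, (mul_assoc c t s).symm⟩⟩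
        have hsub2 : (Set.range fun s => c * s) ⊆ Set.range fun s => b * s := by
          rintro x' ⟨t, rfl⟩
          refine ⟨w * t, ?_⟩
          show b * (w * t) = c * t
          rw [← mul_assoc, hw]
        have hEq := hmin.2 _ hJ hsub2
        have hd' : d ∈ Set.range fun s => b * s := hd
        rw [← hEq] at hd'
        exact hd'
      have hright : ∀ k : ℕ, ∃ z, b ^ (k + 1) = b ^ (k + 2) * z := by
        intro k
        obtain ⟨v, hv⟩ := hCS' (b ^ (k + 2)) ⟨b ^ (k + 1), (pow_succ' b (k + 1)).symm⟩
          b ⟨1, mul_one b⟩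
        refine ⟨b ^ k * v, ?_⟩
        calc b ^ (k + 1) = b ^ k * b := pow_succ b k
          _ = b ^ k * (b ^ (k + 2) * v) := by rw [hv]
          _ = (b ^ k * b ^ (k + 2)) * v := (mul_assoc _ _ _).symm
          _ = (b ^ (k + 2) * b ^ k) * v := by rw [pow_mul_comm]
          _ = b ^ (k + 2) * (b ^ k * v) := mul_assoc _ _ _
      obtain ⟨K, hleft⟩ := stmt11_condA_pow hA b
      obtain ⟨x, hx⟩ := stmt11_pow_iter_left b K hleft (K + 1)
      obtain ⟨y, hy⟩ := stmt11_pow_iter_right b K (fun k _ => hright k) (K + 1)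
      have hpow2 : b ^ (K + 1 + (K + 1)) = b ^ (K + 1) * b ^ (K + 1) := pow_add b _ _
      rw [hpow2] at hx hy
      obtain ⟨e, hee, hea, hae, ⟨p, hp⟩, ⟨q, hq⟩⟩ := stmt11_idem_pack (b ^ (K + 1)) x y hx hy
      have hbK : b * b ^ K = b ^ (K + 1) := (pow_succ' b K).symm
      have heb : e * b = b := by
        obtain ⟨v, hv⟩ := hCS' (b ^ (K + 1)) ⟨b ^ K, hbK⟩ b ⟨1, mul_one b⟩
        rw [← hv, ← mul_assoc, hea]
      have heSb : ∃ w : S, b * w = e := ⟨b ^ K * q, by rw [← mul_assoc, hbK, ← hq]⟩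
      have hrinv0 : ∀ t : S, ∃ w : S, (e * t * e) * (e * w * e) = e := by
        intro t
        obtain ⟨w0, hw0⟩ := id heSb
        have hese : ∃ w : S, b * w = e * t * e :=
          ⟨w0 * (t * e), by rw [← mul_assoc, hw0, ← mul_assoc]⟩
        obtain ⟨v, hv⟩ := hCS' (e * t * e) hese e heSb
        refine ⟨v, ?_⟩
        calc (e * t * e) * (e * v * e) = (e * t * e) * (e * (v * e)) := by rw [mul_assoc e v e]
          _ = ((e * t * e) * e) * (v * e) := (mul_assoc _ _ _).symm
          _ = (e * t * e) * (v * e) := by rw [mul_assoc (e * t) e e, hee]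
          _ = ((e * t * e) * v) * e := (mul_assoc _ _ _).symm
          _ = e * e := by rw [hv]
          _ = e := hee
      have hlinv := stmt11_linv_of_rinv e hee hrinv0
      constructor
      · exact ⟨⟨b, 1, one_mul b⟩, by rintro s x' ⟨t, rfl⟩; exact ⟨s * t, mul_assoc s t b⟩⟩
      · intro J hJ hJsub
        obtain ⟨⟨d, hd⟩, hJl⟩ := hJ
        obtain ⟨t, ht⟩ := hJsub hd
        obtain ⟨g, hg⟩ := hlinv t
        have hkey : ((e * g * e) * e) * d = b := by
          rw [← ht]
          calc ((e * g * e) * e) * (t * b) = (e * g * e) * (e * (t * b)) := mul_assoc _ _ _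
            _ = (e * g * e) * ((e * t) * b) := by rw [← mul_assoc e t b]
            _ = (e * g * e) * ((e * t) * (e * b)) := by rw [heb]
            _ = (e * g * e) * (((e * t) * e) * b) := by rw [← mul_assoc (e * t) e b]
            _ = ((e * g * e) * ((e * t) * e)) * b := (mul_assoc _ _ _).symm
            _ = e * b := by rw [hg]
            _ = b := heb
        apply Set.Subset.antisymm hJsub
        rintro x0 ⟨u, rfl⟩
        show u * b ∈ J
        have hrw : u * b = (u * ((e * g * e) * e)) * d := by rw [mul_assoc, hkey]
        rw [hrw]
        exact hJl _ d hd
  · rintro b0 b1 hsub ⟨φ, hbij, heqv⟩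
    have hmap : ∀ m : S, (∃ x, x * b0 = m) → ∃ x, x * b0 = φ m := by
      intro m hm
      exact hsub (hbij.mapsTo hm)
    obtain ⟨j, s, hjs⟩ := stmt11_condA_key hA b0 φ hmap (fun s m hm => heqv s m hm)
    have hmapsI : ∀ m : S, m ∈ Set.range (fun s : S => s * b0) →
        φ m ∈ Set.range (fun s : S => s * b0) :=
      fun m hm => hsub (hbij.mapsTo hm)
    have cancel : ∀ (j : ℕ) (u v : S), u ∈ Set.range (fun s : S => s * b0) →
        v ∈ Set.range (fun s : S => s * b0) → φ^[j] u = φ^[j] v → u = v := by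
      intro j
      induction j with
      | zero => intro u v _ _ h; simpa using h
      | succ n ih =>
          intro u v hu hv h
          rw [Function.iterate_succ_apply, Function.iterate_succ_apply] at h
          exact hbij.injOn hu hv (ih _ _ (hmapsI _ hu) (hmapsI _ hv) h)
    have hsb0I : (s * b0) ∈ Set.range (fun s : S => s * b0) := ⟨s, rfl⟩
    have hb0I : (b0 : S) ∈ Set.range (fun s : S => s * b0) := ⟨1, one_mul b0⟩
    have hfeq : φ (s * b0) = b0 := cancel j _ _ (hmapsI _ hsb0I) hb0I hjs
    have hb0mem : b0 ∈ Set.range (fun s : S => s * b1) := by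
      rw [← hfeq]
      exact hbij.mapsTo hsb0I
    obtain ⟨w, hw⟩ := hb0mem
    apply Set.Subset.antisymm ?_ hsub
    rintro x0 ⟨u, rfl⟩
    have hw' : w * b1 = b0 := hw
    refine ⟨u * w, ?_⟩
    show (u * w) * b1 = u * b0
    rw [mul_assoc, hw']
end

section
/- Let S be a monoid, s ∈ S and n ∈ ℕ such that for all t ∈ S the set {x ∈ S | sx = t} has at most n elements. Then for every strongly flat left S-act A and every a ∈ A, the set {x ∈ A | s·x = a} has at most n elements. -/
universe u

/-- A left `S`-act is strongly flat if it satisfies conditions (P) and (E). -/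
def StronglyFlat (S : Type u) [Monoid S] (B : Type u) [MulAction S B] : Prop :=
  CondP S B ∧ CondE S B

/-- Key lemma: in an act satisfying (P), any finite set of solutions of
`s • x = a` is "covered" by a single element `z`, with multipliers having a
common product with `s`. -/
theorem key_lemma {S : Type u} [Monoid S] {A : Type u} [MulAction S A]
    (hP : CondP S A) (s : S) (a : A) :
    ∀ F : Finset A, (∀ x ∈ F, s • x = a) →
      F = ∅ ∨ ∃ (z : A) (c : S), ∀ x ∈ F, ∃ u : S, x = u • z ∧ s * u = c := by
  classical
  intro F
  induction F using Finset.induction_on with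
  | empty => intro _; exact Or.inl rfl
  | @insert b F' hb ih =>
    intro hmem
    right
    rcases ih (fun x hx => hmem x (Finset.mem_insert_of_mem hx)) with h0 | ⟨z, c, hz⟩
    · subst h0
      refine ⟨b, s * 1, fun x hx => ?_⟩
      simp only [Finset.mem_insert, Finset.notMem_empty, or_false] at hx
      subst hx
      exact ⟨1, by simp, rfl⟩
    · rcases Finset.eq_empty_or_nonempty F' with h0 | ⟨x₁, hx₁⟩
      · subst h0
        refine ⟨b, s * 1, fun x hx => ?_⟩
        simp only [Finset.mem_insert, Finset.notMem_empty, or_false] at hx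
        subst hx
        exact ⟨1, by simp, rfl⟩
      · obtain ⟨u₁, hu₁z, hu₁c⟩ := hz x₁ hx₁
        have hsb : s • b = c • z := by
          rw [hmem b (Finset.mem_insert_self b F'), ← hmem x₁ (Finset.mem_insert_of_mem hx₁),
            hu₁z, ← hu₁c, mul_smul]
        obtain ⟨w, p, q, hbp, hzq, hpq⟩ := hP s c b z hsb
        refine ⟨w, c * q, fun x hx => ?_⟩
        rcases Finset.mem_insert.mp hx with rfl | hxF
        · exact ⟨p, hbp, hpq⟩
        · obtain ⟨u, huz, huc⟩ := hz x hxF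
          refine ⟨u * q, ?_, by rw [← mul_assoc, huc]⟩
          rw [huz, hzq, mul_smul]

/-- if for `s ∈ S` and `n ∈ ℕ` every equation `s * x = t` has at
most `n` solutions in `S`, then in every strongly flat left `S`-act `A` the
equation `s • x = a` has at most `n` solutions, for every `a ∈ A`. -/
theorem stmt_12 {S : Type u} [Monoid S] (s : S) (n : ℕ)
    (h : ∀ t : S, {x : S | s * x = t}.encard ≤ (n : ℕ∞))
    (A : Type u) [MulAction S A] (hA : StronglyFlat S A) (a : A) :
    {x : A | s • x = a}.encard ≤ (n : ℕ∞) := by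
  by_contra hc
  push_neg at hc
  have h1 : ((n + 1 : ℕ) : ℕ∞) ≤ {x : A | s • x = a}.encard := by
    push_cast
    exact Order.add_one_le_of_lt hc
  obtain ⟨T, hTsub, hTcard⟩ := Set.exists_subset_encard_eq h1
  have hTfin : T.Finite := Set.finite_of_encard_eq_coe hTcard
  set F : Finset A := hTfin.toFinset with hF
  have hmemF : ∀ x ∈ F, s • x = a := fun x hx =>
    hTsub (hTfin.mem_toFinset.mp hx)
  rcases key_lemma hA.1 s a F hmemF with h0 | ⟨z, c, hz⟩
  · have : T = ∅ := by
      rw [← Set.Finite.coe_toFinset hTfin, ← hF, h0]; simp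
    rw [this, Set.encard_empty] at hTcard
    exact absurd hTcard.symm (by exact_mod_cast Nat.succ_ne_zero n)
  · classical
    set g : A → S := fun x =>
      if hx : ∃ u : S, x = u • z ∧ s * u = c then hx.choose else 1 with hg
    have hspec : ∀ x ∈ T, x = g x • z ∧ s * g x = c := by
      intro x hxT
      have hxF : x ∈ F := hTfin.mem_toFinset.mpr hxT
      have hex := hz x hxF
      simp only [hg, dif_pos hex]
      exact hex.choose_spec
    have hinj : Set.InjOn g T := by
      intro x hx y hy hxy
      rw [(hspec x hx).1, (hspec y hy).1, hxy]
    have himg : g '' T ⊆ {x : S | s * x = c} := by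
      rintro _ ⟨x, hx, rfl⟩
      exact (hspec x hx).2
    have : ((n + 1 : ℕ) : ℕ∞) ≤ (n : ℕ∞) := by
      calc ((n + 1 : ℕ) : ℕ∞) = T.encard := hTcard.symm
        _ = (g '' T).encard := (hinj.encard_image).symm
        _ ≤ {x : S | s * x = c}.encard := Set.encard_mono himg
        _ ≤ (n : ℕ∞) := h c
    have h2 : n + 1 ≤ n := by exact_mod_cast this
    omega
end

section
/- Let T be a submonoid of a monoid S and let ρ_T be the least left congruence on S containing T × T. Then T is a ρ_T-class, i.e. {s ∈ S | s ρ_T 1} = T, if and only if T is a right unitary submonoid of S. -/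
universe u

/-- A left congruence on a monoid `S`: an equivalence relation compatible with
left multiplication. -/
def IsLeftCong {S : Type u} [Monoid S] (θ : S → S → Prop) : Prop :=
  Equivalence θ ∧ ∀ (s a b : S), θ a b → θ (s * a) (s * b)

/-- `rhoGen X` is the least left congruence on `S` containing `X × X`
(the intersection of all left congruences relating all pairs from `X`). -/
def rhoGen {S : Type u} [Monoid S] (X : Set S) (a b : S) : Prop :=
  ∀ θ : S → S → Prop, IsLeftCong θ → (∀ t ∈ X, ∀ t' ∈ X, θ t t') → θ a b

/-- for a submonoid `T` of `S`, `T` is the `ρ_T`-class of `1`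
(where `ρ_T` is the least left congruence containing `T × T`) if and only if
`T` is right unitary (`st ∈ T` and `t ∈ T` imply `s ∈ T`). -/
theorem stmt_15 {S : Type u} [Monoid S] (T : Submonoid S) :
    {s : S | rhoGen (T : Set S) s 1} = (T : Set S) ↔
      (∀ s t : S, t ∈ T → s * t ∈ T → s ∈ T) := by
  constructor
  · intro h s t ht hst
    have hs1 : rhoGen (T : Set S) s 1 := by
      intro θ hθ hT
      have h1t : θ 1 t := hT 1 T.one_mem t ht
      have h2 : θ (s * 1) (s * t) := hθ.2 s 1 t h1t
      have h3 : θ (s * t) 1 := hT (s * t) hst 1 T.one_mem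
      exact hθ.1.trans (by simpa using h2) h3
    have := h ▸ (Set.mem_setOf_eq ▸ hs1 : s ∈ {s : S | rhoGen (T : Set S) s 1})
    exact this
  · intro hru
    ext s
    simp only [Set.mem_setOf_eq, SetLike.mem_coe]
    constructor
    · intro hs
      have key := hs (fun a b => ∀ u, u * a ∈ T ↔ u * b ∈ T)
        ⟨⟨fun a u => Iff.rfl,
          fun {a b} hab u => (hab u).symm,
          fun {a b c} hab hbc u => (hab u).trans (hbc u)⟩,
         fun s a b hab u => by simpa [mul_assoc] using hab (u * s)⟩
        (fun t ht t' ht' u => by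
          constructor
          · intro hut
            exact T.mul_mem (hru u t ht hut) ht'
          · intro hut'
            exact T.mul_mem (hru u t' ht' hut') ht)
      have := (key 1).mpr (by simpa using T.one_mem)
      simpa using this
    · intro hs θ hθ hT
      exact hT s hs 1 T.one_mem
end

section
/- Let T be a right unitary submonoid of a monoid S and let ρ_T be the least left congruence on S containing T × T. Then T is right collapsible if and only if ρ_T is a strongly flat left congruence, i.e. for all x, y ∈ S: x ρ_T y if and only if there exists z ∈ S with z ρ_T 1 and xz = yz. -/
universe u

lemma rhoGen_isLeftCong {S : Type u} [Monoid S] (X : Set S) :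
    IsLeftCong (rhoGen X) := by
  refine ⟨⟨fun a θ hθ _ => hθ.1.refl a,
    fun h θ hθ hX => hθ.1.symm (h θ hθ hX),
    fun h h' θ hθ hX => hθ.1.trans (h θ hθ hX) (h' θ hθ hX)⟩,
    fun s a b h θ hθ hX => hθ.2 s a b (h θ hθ hX)⟩

lemma rhoGen_of_mem {S : Type u} [Monoid S] {X : Set S} {t t' : S}
    (ht : t ∈ X) (ht' : t' ∈ X) : rhoGen X t t' :=
  fun _ _ hX => hX t ht t' ht'

/-- Under right unitarity, the ρ_T-class of 1 is contained in T. -/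
lemma rhoGen_one_mem {S : Type u} [Monoid S] (T : Submonoid S)
    (hru : ∀ s t : S, t ∈ T → s * t ∈ T → s ∈ T) {z : S}
    (hz : rhoGen (T : Set S) z 1) : z ∈ T := by
  have key : ∀ s : S, s * z ∈ T ↔ s * 1 ∈ T := by
    refine hz (fun a b => ∀ s : S, s * a ∈ T ↔ s * b ∈ T)
      ⟨⟨fun a s => Iff.rfl, fun h s => (h s).symm,
        fun h h' s => (h s).trans (h' s)⟩, ?_⟩ ?_
    · intro s a b h r
      simpa [mul_assoc] using h (r * s)
    · intro t ht t' ht' s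
      constructor
      · intro h; exact T.mul_mem (hru s t ht h) ht'
      · intro h; exact T.mul_mem (hru s t' ht' h) ht
  exact ((by simpa using key 1 : z ∈ T ↔ (1:S) ∈ T)).mpr T.one_mem

/-- for a right unitary submonoid `T` of `S`, `T` is right
collapsible if and only if the least left congruence `ρ_T` containing `T × T`
is strongly flat: `x ρ_T y` iff there is `z` with `z ρ_T 1` and `xz = yz`. -/
theorem stmt_16 {S : Type u} [Monoid S] (T : Submonoid S)
    (hru : ∀ s t : S, t ∈ T → s * t ∈ T → s ∈ T) :
    (∀ s ∈ T, ∀ t ∈ T, ∃ u ∈ T, s * u = t * u) ↔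
      (∀ x y : S, rhoGen (T : Set S) x y ↔
        ∃ z : S, rhoGen (T : Set S) z 1 ∧ x * z = y * z) := by
  have hcong := rhoGen_isLeftCong (S := S) (T : Set S)
  constructor
  · intro hrc x y
    constructor
    · intro hxy
      -- the relation ∃ u ∈ T, x u = y u is a left congruence containing T×T
      have := hxy (fun a b => ∃ u ∈ T, a * u = b * u)
        ⟨⟨fun a => ⟨1, T.one_mem, rfl⟩,
          fun ⟨u, hu, h⟩ => ⟨u, hu, h.symm⟩,
          fun ⟨u, hu, h⟩ ⟨v, hv, h'⟩ => by
            obtain ⟨w, hw, hw'⟩ := hrc u hu v hv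
            exact ⟨u * w, T.mul_mem hu hw, by
              rw [← mul_assoc, ← mul_assoc, h, mul_assoc, hw', ← mul_assoc,
                h', mul_assoc, ← hw', ← mul_assoc]⟩⟩,
          fun s a b ⟨u, hu, h⟩ => ⟨u, hu, by rw [mul_assoc, mul_assoc, h]⟩⟩
        (fun t ht t' ht' => hrc t ht t' ht')
      obtain ⟨u, hu, h⟩ := this
      exact ⟨u, rhoGen_of_mem hu T.one_mem, h⟩
    · rintro ⟨z, hz, hxz⟩
      have h1 : rhoGen (T : Set S) (x * z) (x * 1) := hcong.2 x _ _ hz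
      have h2 : rhoGen (T : Set S) (y * z) (y * 1) := hcong.2 y _ _ hz
      rw [mul_one] at h1 h2
      exact hcong.1.trans (hcong.1.symm h1) (hxz ▸ h2)
  · intro h s hs t ht
    obtain ⟨z, hz, hsz⟩ := (h s t).mp (rhoGen_of_mem hs ht)
    exact ⟨z, rhoGen_one_mem T hru hz, hsz⟩
end

section
/- Let S be a monoid such that for every set I and every ultrafilter Φ on I, the ultrapower S^I/Φ of the left S-act S is free. Then for every idempotent e ∈ S with e ≠ 1 there exists a finite subset F ⊆ S such that every a ∈ S has an e-good factorisation through some w ∈ F: that is, a = wy for some y ∈ S such that there are no w', z ∈ S with y = w'z, e = ww' and Sw' = Se. -/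
universe u

/-- A left `S`-act `F` is free if it has a basis `X`: every element of `F` is
uniquely of the form `s • x` with `s ∈ S` and `x ∈ X`. -/
def IsFreeAct (S : Type u) [Monoid S] (F : Type u) [MulAction S F] : Prop :=
  ∃ X : Set F, ∀ a : F, ∃! p : S × X, p.1 • (p.2 : F) = a

lemma germ_exists_rep {α β : Type*} {l : Filter α} (u : Filter.Germ l β) :
    ∃ f : α → β, (f : Filter.Germ l β) = u :=
  u.inductionOn fun f => ⟨f, rfl⟩

lemma free_uniq {S F : Type u} [Monoid S] [MulAction S F] {X : Set F}
    (hX : ∀ a : F, ∃! p : S × X, p.1 • (p.2 : F) = a)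
    {σ τ : S} {xx yy : X} {u : F}
    (h1 : σ • (xx : F) = u) (h2 : τ • (yy : F) = u) :
    σ = τ ∧ (xx : F) = (yy : F) := by
  have h : ((σ, xx) : S × X) = (τ, yy) := (hX u).unique h1 h2
  exact ⟨congrArg Prod.fst h, congrArg (fun p : S × X => (p.2 : F)) h⟩

lemma aux_pow {S : Type u} [Monoid S] {r d : S} (hrd : r * d = 1) :
    ∀ k m : ℕ, r ^ k * d ^ (k + m) = d ^ m := by
  intro k
  induction k with
  | zero => intro m; simp
  | succ k ih =>
    intro m
    have h1 : k + 1 + m = (k + m) + 1 := by omega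
    rw [h1, pow_succ r k, pow_succ' d (k + m)]
    calc r ^ k * r * (d * d ^ (k + m)) = r ^ k * (r * d * d ^ (k + m)) := by
          simp [mul_assoc]
      _ = r ^ k * d ^ (k + m) := by rw [hrd, one_mul]
      _ = d ^ m := ih m

/-- If every ultrapower of `S` is a free `S`-act, then `S` is Dedekind-finite. -/
lemma dedekind_of_free {S : Type u} [Monoid S]
    (h : ∀ (I : Type u) (Φ : Ultrafilter I), IsFreeAct S (Filter.Germ (Φ : Filter I) S))
    {r d : S} (hrd : r * d = 1) : d * r = 1 := by
  classical
  set Φ : Ultrafilter (ULift.{u} ℕ) := Ultrafilter.of Filter.cofinite with hΦ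
  have hle : (Φ : Filter (ULift.{u} ℕ)) ≤ Filter.cofinite := Ultrafilter.of_le _
  obtain ⟨X, hX⟩ := h (ULift.{u} ℕ) Φ
  set φ : ULift.{u} ℕ → S := fun n => d ^ n.down with hφ
  obtain ⟨⟨σ, x⟩, hσ, -⟩ := hX (φ : Filter.Germ (Φ : Filter (ULift.{u} ℕ)) S)
  obtain ⟨g, hg⟩ := germ_exists_rep (x : Filter.Germ (Φ : Filter (ULift.{u} ℕ)) S)
  have hA : ∀ᶠ n in (Φ : Filter (ULift.{u} ℕ)), d ^ n.down = σ * g n := by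
    have h1 : ((σ • g : ULift.{u} ℕ → S) : Filter.Germ (Φ : Filter (ULift.{u} ℕ)) S)
        = (φ : Filter.Germ (Φ : Filter (ULift.{u} ℕ)) S) := by
      rw [Filter.Germ.coe_smul, hg]; exact hσ
    have h2 := Filter.Germ.coe_eq.mp h1
    filter_upwards [h2] with n hn
    simpa [smul_eq_mul] using hn.symm
  have habs : ∀ k : ℕ, (d ^ k * r ^ k) * σ = σ := by
    intro k
    have hev : ((d ^ k * r ^ k) • (φ : Filter.Germ (Φ : Filter (ULift.{u} ℕ)) S))
        = (φ : Filter.Germ (Φ : Filter (ULift.{u} ℕ)) S) := by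
      rw [← Filter.Germ.coe_smul, Filter.Germ.coe_eq]
      have hcof : {n : ULift.{u} ℕ | k ≤ n.down} ∈ (Φ : Filter (ULift.{u} ℕ)) := by
        apply hle
        rw [Filter.mem_cofinite]
        have : {n : ULift.{u} ℕ | k ≤ n.down}ᶜ = ULift.down ⁻¹' {m : ℕ | m < k} := by
          ext n; simp [Nat.not_le]
        rw [this]
        exact (Set.finite_Iio k).preimage (Function.Injective.injOn ULift.down_injective)
      filter_upwards [hcof] with n hn
      show (d ^ k * r ^ k) • (d ^ n.down) = d ^ n.down
      obtain ⟨m, hm⟩ := Nat.exists_eq_add_of_le hn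
      rw [smul_eq_mul, hm, mul_assoc, aux_pow hrd k m, ← pow_add]
    have h1 : ((d ^ k * r ^ k) * σ) • (x : Filter.Germ (Φ : Filter (ULift.{u} ℕ)) S)
        = (φ : Filter.Germ (Φ : Filter (ULift.{u} ℕ)) S) := by
      rw [← smul_smul, hσ]; exact hev
    exact (free_uniq hX h1 hσ).1
  obtain ⟨n₀, hn₀⟩ := hA.exists
  set N := n₀.down with hN
  have key : d * (r ^ (N + 1) * σ * g n₀) = 1 := by
    have e1 : (1 : S) = r ^ N * d ^ N := by
      have := aux_pow hrd N 0
      simpa using this.symm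
    have e2 : r ^ N * d ^ (N + 1) = d := by
      have := aux_pow hrd N 1
      simpa using this
    calc d * (r ^ (N + 1) * σ * g n₀)
        = (r ^ N * d ^ (N + 1)) * (r ^ (N + 1) * σ * g n₀) := by rw [e2]
      _ = r ^ N * ((d ^ (N + 1) * r ^ (N + 1)) * σ * g n₀) := by simp [mul_assoc]
      _ = r ^ N * (σ * g n₀) := by rw [habs (N + 1)]
      _ = r ^ N * d ^ N := by rw [← hn₀]
      _ = 1 := e1.symm
  have hr : r = r ^ (N + 1) * σ * g n₀ := by
    calc r = r * 1 := (mul_one r).symm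
      _ = r * (d * (r ^ (N + 1) * σ * g n₀)) := by rw [key]
      _ = (r * d) * (r ^ (N + 1) * σ * g n₀) := by rw [← mul_assoc]
      _ = r ^ (N + 1) * σ * g n₀ := by rw [hrd, one_mul]
  rw [hr]; exact key

/-- suppose every ultrapower `S^I/Φ` of the left `S`-act `S` is
free. Then for every idempotent `e ≠ 1` there is a finite set `F ⊆ S` such
that every `a ∈ S` has an `e`-good factorisation `a = w * y` through some
`w ∈ F`: there are no `w', z` with `y = w' * z`, `e = w * w'` and `Sw' = Se`. -/
theorem stmt_18 {S : Type u} [Monoid S]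
    (h : ∀ (I : Type u) (Φ : Ultrafilter I), IsFreeAct S (Filter.Germ (Φ : Filter I) S))
    (e : S) (he : e * e = e) (hne : e ≠ 1) :
    ∃ F : Finset S, ∀ a : S, ∃ w ∈ F, ∃ y : S, a = w * y ∧
      ¬ ∃ w' z : S, y = w' * z ∧ e = w * w' ∧
        Set.range (fun s => s * w') = Set.range (fun s => s * e) := by
  classical
  by_contra h0
  push_neg at h0
  choose a ha using h0
  -- the ultrafilter on `Finset S` of "large" finite sets
  haveI : Nonempty (Finset S) := ⟨∅⟩
  set Φ : Ultrafilter (Finset S) := Ultrafilter.of Filter.atTop with hΦdef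
  have hle : (Φ : Filter (Finset S)) ≤ Filter.atTop := Ultrafilter.of_le _
  have hmem : ∀ w : S, ∀ᶠ F : Finset S in (Φ : Filter (Finset S)), w ∈ F := by
    intro w
    apply hle
    have h1 : {F : Finset S | {w} ≤ F} ∈ (Filter.atTop : Filter (Finset S)) :=
      Filter.mem_atTop _
    refine Filter.mem_of_superset h1 ?_
    intro F hF
    exact Finset.singleton_subset_iff.mp hF
  obtain ⟨X, hX⟩ := h (Finset S) Φ
  -- the representation of the germ of the bad elements
  obtain ⟨⟨s, x⟩, hsx, -⟩ := hX (a : Filter.Germ (Φ : Filter (Finset S)) S)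
  obtain ⟨g, hg⟩ := germ_exists_rep (x : Filter.Germ (Φ : Filter (Finset S)) S)
  have hA : ∀ᶠ F in (Φ : Filter (Finset S)), a F = s * g F := by
    have h1 : ((s • g : Finset S → S) : Filter.Germ (Φ : Filter (Finset S)) S)
        = (a : Filter.Germ (Φ : Filter (Finset S)) S) := by
      rw [Filter.Germ.coe_smul, hg]; exact hsx
    have h2 := Filter.Germ.coe_eq.mp h1
    filter_upwards [h2] with F hF
    simpa [smul_eq_mul] using hF.symm
  -- the representation of the constant germ `1`
  obtain ⟨⟨c₁, χ⟩, hc₁, -⟩ := hX ((fun _ : Finset S => (1 : S)) :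
    Filter.Germ (Φ : Filter (Finset S)) S)
  obtain ⟨g₁, hg₁⟩ := germ_exists_rep (χ : Filter.Germ (Φ : Filter (Finset S)) S)
  have hC : ∀ᶠ F in (Φ : Filter (Finset S)), (1 : S) = c₁ * g₁ F := by
    have h1 : ((c₁ • g₁ : Finset S → S) : Filter.Germ (Φ : Filter (Finset S)) S)
        = ((fun _ : Finset S => (1 : S)) : Filter.Germ (Φ : Filter (Finset S)) S) := by
      rw [Filter.Germ.coe_smul, hg₁]; exact hc₁
    have h2 := Filter.Germ.coe_eq.mp h1
    filter_upwards [h2] with F hF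
    simpa [smul_eq_mul] using hF.symm
  -- choose the badness witnesses for the canonical factorisation `a F = s * g F`
  have hch : ∀ F : Finset S, ∃ w' z : S, (a F = s * g F ∧ s ∈ F) →
      (g F = w' * z ∧ e = s * w' ∧
        Set.range (fun u => u * w') = Set.range (fun u => u * e)) := by
    intro F
    by_cases hF : a F = s * g F ∧ s ∈ F
    · obtain ⟨w', z, hz⟩ := ha F s hF.2 (g F) hF.1
      exact ⟨w', z, fun _ => hz⟩
    · exact ⟨1, 1, fun hc => absurd hc hF⟩
  choose w' z hwz using hch
  have hGood : ∀ᶠ F in (Φ : Filter (Finset S)),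
      g F = w' F * z F ∧ e = s * w' F ∧
        Set.range (fun u => u * w' F) = Set.range (fun u => u * e) := by
    filter_upwards [hA, hmem s] with F h1 h2
    exact hwz F ⟨h1, h2⟩
  -- representation of the germ of the tails `z`
  obtain ⟨⟨t, ξz⟩, htz, -⟩ := hX (z : Filter.Germ (Φ : Filter (Finset S)) S)
  have hez : e • (z : Filter.Germ (Φ : Filter (Finset S)) S)
      = (a : Filter.Germ (Φ : Filter (Finset S)) S) := by
    rw [← Filter.Germ.coe_smul, Filter.Germ.coe_eq]
    filter_upwards [hA, hGood] with F h1 h2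
    show e • z F = a F
    rw [smul_eq_mul]
    calc e * z F = (s * w' F) * z F := by rw [← h2.2.1]
      _ = s * (w' F * z F) := mul_assoc _ _ _
      _ = s * g F := by rw [← h2.1]
      _ = a F := h1.symm
  have h5 : (e * t) • (ξz : Filter.Germ (Φ : Filter (Finset S)) S)
      = (a : Filter.Germ (Φ : Filter (Finset S)) S) := by
    rw [← smul_smul, htz]; exact hez
  obtain ⟨-, hξz⟩ := free_uniq hX h5 hsx
  have hzt : ∀ᶠ F in (Φ : Filter (Finset S)), z F = t * g F := by
    have h1 : ((t • g : Finset S → S) : Filter.Germ (Φ : Filter (Finset S)) S)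
        = (z : Filter.Germ (Φ : Filter (Finset S)) S) := by
      rw [Filter.Germ.coe_smul, hg, ← hξz]; exact htz
    have h2 := Filter.Germ.coe_eq.mp h1
    filter_upwards [h2] with F hF
    simpa [smul_eq_mul] using hF.symm
  -- representation of the germ of the witnesses `w'`
  obtain ⟨⟨r, ξw⟩, hrw, -⟩ := hX (w' : Filter.Germ (Φ : Filter (Finset S)) S)
  have hsw : s • (w' : Filter.Germ (Φ : Filter (Finset S)) S)
      = ((fun _ : Finset S => e) : Filter.Germ (Φ : Filter (Finset S)) S) := by
    rw [← Filter.Germ.coe_smul, Filter.Germ.coe_eq]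
    filter_upwards [hGood] with F hF
    show s • w' F = e
    rw [smul_eq_mul]; exact hF.2.1.symm
  have hec : (e * c₁) • (χ : Filter.Germ (Φ : Filter (Finset S)) S)
      = ((fun _ : Finset S => e) : Filter.Germ (Φ : Filter (Finset S)) S) := by
    rw [← smul_smul, hc₁, ← Filter.Germ.coe_smul, Filter.Germ.coe_eq]
    apply Filter.Eventually.of_forall
    intro F
    show e • (1 : S) = e
    rw [smul_eq_mul, mul_one]
  have h6 : (s * r) • (ξw : Filter.Germ (Φ : Filter (Finset S)) S)
      = ((fun _ : Finset S => e) : Filter.Germ (Φ : Filter (Finset S)) S) := by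
    rw [← smul_smul, hrw]; exact hsw
  obtain ⟨-, hξw⟩ := free_uniq hX h6 hec
  have hwr : ∀ᶠ F in (Φ : Filter (Finset S)), w' F = r * g₁ F := by
    have h1 : ((r • g₁ : Finset S → S) : Filter.Germ (Φ : Filter (Finset S)) S)
        = (w' : Filter.Germ (Φ : Filter (Finset S)) S) := by
      rw [Filter.Germ.coe_smul, hg₁, ← hξw]; exact hrw
    have h2 := Filter.Germ.coe_eq.mp h1
    filter_upwards [h2] with F hF
    simpa [smul_eq_mul] using hF.symm
  -- the loop: `x = r • μ` with `μ = d • x`, forcing `r * d = 1`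
  set μ : Finset S → S := fun F => g₁ F * (t * g F) with hμ
  have hrμ : r • (μ : Filter.Germ (Φ : Filter (Finset S)) S)
      = (x : Filter.Germ (Φ : Filter (Finset S)) S) := by
    rw [← hg, ← Filter.Germ.coe_smul, Filter.Germ.coe_eq]
    filter_upwards [hGood, hzt, hwr] with F h1 h2 h3
    show r • (g₁ F * (t * g F)) = g F
    rw [smul_eq_mul]
    calc r * (g₁ F * (t * g F)) = (r * g₁ F) * (t * g F) := (mul_assoc _ _ _).symm
      _ = w' F * (t * g F) := by rw [← h3]
      _ = w' F * z F := by rw [← h2]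
      _ = g F := h1.1.symm
  obtain ⟨⟨d, ξμ⟩, hdμ, -⟩ := hX (μ : Filter.Germ (Φ : Filter (Finset S)) S)
  have h7 : (r * d) • (ξμ : Filter.Germ (Φ : Filter (Finset S)) S)
      = (x : Filter.Germ (Φ : Filter (Finset S)) S) := by
    rw [← smul_smul, hdμ]; exact hrμ
  have h8 : (1 : S) • (x : Filter.Germ (Φ : Filter (Finset S)) S)
      = (x : Filter.Germ (Φ : Filter (Finset S)) S) := one_smul _ _
  obtain ⟨hrd, -⟩ := free_uniq hX h7 h8
  -- Dedekind-finiteness makes `r` a unit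
  have hdr : d * r = 1 := dedekind_of_free h hrd
  -- now pick a single good index and derive `e = 1`
  obtain ⟨F₀, hF₀⟩ := (hGood.and (hC.and hwr)).exists
  obtain ⟨⟨-, -, hran⟩, hCF, hwF⟩ := hF₀
  obtain ⟨m, hm⟩ : ∃ m : S, m * e = w' F₀ := by
    have h9 : w' F₀ ∈ Set.range (fun u : S => u * e) := by
      rw [← hran]
      exact ⟨1, one_mul _⟩
    exact h9
  have hg₁e : g₁ F₀ = d * (m * e) := by
    calc g₁ F₀ = 1 * g₁ F₀ := (one_mul _).symm
      _ = (d * r) * g₁ F₀ := by rw [hdr]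
      _ = d * (r * g₁ F₀) := mul_assoc _ _ _
      _ = d * w' F₀ := by rw [← hwF]
      _ = d * (m * e) := by rw [← hm]
  have h1e : (1 : S) = (c₁ * (d * m)) * e := by
    calc (1 : S) = c₁ * g₁ F₀ := hCF
      _ = c₁ * (d * (m * e)) := by rw [hg₁e]
      _ = (c₁ * (d * m)) * e := by simp [mul_assoc]
  have hfin : e = 1 := by
    calc e = 1 * e := (one_mul e).symm
      _ = ((c₁ * (d * m)) * e) * e := by rw [← h1e]
      _ = (c₁ * (d * m)) * (e * e) := mul_assoc _ _ _
      _ = (c₁ * (d * m)) * e := by rw [he]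
      _ = 1 := h1e.symm
  exact hne hfin
end

section
/- Let S be a monoid such that S ∖ R₁ = s₁S ∪ ⋯ ∪ sₘS for some s₁, …, sₘ ∈ S, where R₁ = {a ∈ S | aS = S}, and suppose that for every set I and every ultrafilter Φ on I the ultrapower S^I/Φ of the left S-act S is free. Then the group of units H₁ of S has finite right index in S: there exist u₁, …, uₙ ∈ S with S = u₁H₁ ∪ ⋯ ∪ uₙH₁. -/
/-!
Write the germ of a sequence `a : ℕ → S` in the free ultrapower over a nonprincipal
ultrafilter on `ℕ` as `τ • x` with `x` a basis element. Since `S ∖ R₁` is a finite union of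
principal right ideals, the components of `x` are almost all in `R₁`, so some `i < j` have
`a i = τ * p` and `a j = τ * q` with `p, q ∈ R₁`. For `a n = c ^ n` with `b * c = 1` this makes
`c` right invertible, so `S` is Dedekind-finite and `R₁ = H₁`. For an arbitrary sequence it
puts two terms in one coset `u H₁`, i.e. one class of `Associates S`; hence there are finitely
many cosets.
-/

universe u

open Filter

section

variable {S : Type u} [Monoid S]

lemma range_mul_eq_univ_iff (a : S) :
    Set.range (a * ·) = Set.univ ↔ ∃ b, a * b = 1 := by
  rw [Set.range_eq_univ]
  exact ⟨fun h => h 1, fun ⟨b, hb⟩ y => ⟨b * y, by simp [← mul_assoc, hb]⟩⟩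

lemma exists_mul_eq_one_of_smul_mem_basis {F : Type*} [MulAction S F] {X : Set F}
    (hX : ∀ a : F, ∃! p : S × X, p.1 • (p.2 : F) = a) {s : S} {y : F} (hy : s • y ∈ X) :
    ∃ r, s * r = 1 := by
  obtain ⟨⟨r, z⟩, hrz, -⟩ := hX y
  obtain ⟨_, -, huniq⟩ := hX (s • y)
  have hsr : ((s * r, z) : S × X) = (1, ⟨s • y, hy⟩) :=
    (huniq (s * r, z) (by simp only [mul_smul, hrz])).trans (huniq _ (one_smul _ _)).symm
  exact ⟨r, congrArg Prod.fst hsr⟩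

/-- Representatives of a basis element of a free ultrapower are almost everywhere in `R₁`:
otherwise they almost all lie in one ideal `s j S`, so the basis element is divisible by the
non-right-invertible `s j`. -/
lemma eventually_exists_mul_eq_one_of_mem_basis {ι : Type*} [Finite ι] {s : ι → S}
    (hcover : {a : S | ¬∃ b, a * b = 1} = ⋃ j, Set.range (s j * ·))
    {I : Type u} {Φ : Ultrafilter I} {X : Set (Germ (Φ : Filter I) S)}
    (hX : ∀ a : Germ (Φ : Filter I) S, ∃! p : S × X, p.1 • (p.2 : Germ (Φ : Filter I) S) = a)
    {ψ : I → S} (hψ : (ψ : Germ (Φ : Filter I) S) ∈ X) :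
    ∀ᶠ i in Φ, ∃ b, ψ i * b = 1 := by
  by_contra h
  have hideal : ∀ᶠ i in Φ, ∃ j, ∃ y, s j * y = ψ i := by
    filter_upwards [Ultrafilter.eventually_not.2 h] with i hi
    simpa using (hcover ▸ hi : ψ i ∈ ⋃ j, Set.range (s j * ·))
  obtain ⟨j, hj⟩ := Ultrafilter.eventually_exists_iff.1 hideal
  let g : I → S := fun i => Classical.epsilon fun y => s j * y = ψ i
  have hg : s j • (g : Germ (Φ : Filter I) S) = ψ :=
    Germ.coe_eq.2 (hj.mono fun _ hi => Classical.epsilon_spec hi)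
  have hsj : s j ∈ {a : S | ¬∃ b, a * b = 1} := hcover ▸ Set.mem_iUnion.2 ⟨j, 1, mul_one _⟩
  exact hsj (exists_mul_eq_one_of_smul_mem_basis hX (hg ▸ hψ))

lemma exists_lt_of_eventually_hyperfilter {P : ℕ → Prop}
    (h : ∀ᶠ n in (hyperfilter (ULift.{u} ℕ) : Filter (ULift.{u} ℕ)), P n.down) :
    ∃ i j, i < j ∧ P i ∧ P j := by
  have hinf : {n | P n}.Infinite := by
    have hE : {n : ULift.{u} ℕ | P n.down}.Infinite := fun hfin =>
      notMem_hyperfilter_of_finite hfin h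
    simpa [Set.image] using hE.image ULift.down_injective.injOn
  obtain ⟨i, hi⟩ := hinf.nonempty
  obtain ⟨j, hj, hij⟩ := hinf.exists_gt i
  exact ⟨i, j, hij, hi, hj⟩

lemma exists_lt_eq_mul_eq_mul {ι : Type*} [Finite ι] {s : ι → S}
    (hcover : {a : S | ¬∃ b, a * b = 1} = ⋃ j, Set.range (s j * ·))
    (hfree : IsFreeAct S (Germ (hyperfilter (ULift.{u} ℕ) : Filter (ULift.{u} ℕ)) S))
    (a : ℕ → S) :
    ∃ i j, i < j ∧ ∃ τ p q, (∃ b, p * b = 1) ∧ (∃ b, q * b = 1) ∧ a i = τ * p ∧ a j = τ * q := by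
  obtain ⟨X, hX⟩ := hfree
  obtain ⟨⟨τ, x, hx⟩, hτ, -⟩ := hX (fun n : ULift.{u} ℕ => a n.down)
  induction x using Germ.inductionOn with | h ψ => ?_
  have hE := (Germ.coe_eq.1 hτ).and (eventually_exists_mul_eq_one_of_mem_basis hcover hX hx)
  obtain ⟨i, j, hij, hi, hj⟩ := exists_lt_of_eventually_hyperfilter (P := fun n =>
    τ * ψ ⟨n⟩ = a n ∧ ∃ b, ψ ⟨n⟩ * b = 1) hE
  exact ⟨i, j, hij, τ, ψ ⟨i⟩, ψ ⟨j⟩, hi.2, hj.2, hi.1.symm, hj.1.symm⟩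

/-- With `b ^ i * c ^ i = 1`, the two factorizations give `c ^ (j - i) * (r * p) = 1`. -/
lemma mul_eq_one_symm_of_pow_eq_mul {b c : S} (hbc : b * c = 1) {i j : ℕ} (hij : i < j)
    {τ p q r : S} (hq : q * r = 1) (hi : c ^ i = τ * p) (hj : c ^ j = τ * q) : c * b = 1 := by
  have hpow : c ^ j = c ^ i * (c * c ^ (j - i - 1)) := by
    rw [← pow_succ', ← pow_add]; congr 1; omega
  have hc : c * (c ^ (j - i - 1) * (r * p)) = 1 := by
    calc c * (c ^ (j - i - 1) * (r * p))
        = b ^ i * c ^ j * r * p := by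
          simp only [hpow, ← mul_assoc, pow_mul_pow_eq_one i hbc, one_mul]
      _ = b ^ i * c ^ i := by
          rw [hj, hi]; simp only [mul_assoc]; rw [← mul_assoc q, hq, one_mul]
      _ = 1 := pow_mul_pow_eq_one i hbc
  obtain rfl : b = c ^ (j - i - 1) * (r * p) := left_inv_eq_right_inv hbc hc
  exact hc

lemma isDedekindFiniteMonoid_of_forall_exists_lt
    (h : ∀ a : ℕ → S, ∃ i j, i < j ∧ ∃ τ p q, (∃ b, q * b = 1) ∧ a i = τ * p ∧ a j = τ * q) :
    IsDedekindFiniteMonoid S where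
  mul_eq_one_symm {b c} hbc := by
    obtain ⟨i, j, hij, τ, p, q, ⟨r, hq⟩, hi, hj⟩ := h (c ^ ·)
    exact mul_eq_one_symm_of_pow_eq_mul hbc hij hq hi hj

lemma finite_associates_of_forall_exists_associated
    (h : ∀ a : ℕ → S, ∃ i j, i ≠ j ∧ Associated (a i) (a j)) : Finite (Associates S) := by
  by_contra hfin
  have := not_finite_iff_infinite.1 hfin
  let e := Infinite.natEmbedding (Associates S)
  obtain ⟨i, j, hij, hassoc⟩ := h fun n => Quot.out (e n)
  apply hij (e.injective _)
  rw [← Associates.quot_out (e i), ← Associates.quot_out (e j)]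
  exact Associates.mk_eq_mk_iff_associated.2 hassoc

lemma exists_fin_cover_of_finite_associates [Finite (Associates S)] :
    ∃ (n : ℕ) (u : Fin n → S), ∀ x, ∃ i, Associated (u i) x := by
  let e := Finite.equivFin (Associates S)
  refine ⟨_, fun i => Quot.out (e.symm i), fun x => ⟨e (Associates.mk x), ?_⟩⟩
  simpa only [Equiv.symm_apply_apply] using Associates.mk_quot_out x

end

/-- let `S` be a monoid with `S ∖ R₁ = s₁S ∪ ⋯ ∪ sₘS` (where
`R₁ = {a | aS = S}`), and suppose every ultrapower `S^I/Φ` of the left `S`-act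
`S` is free. Then the group of units `H₁` has finite right index:
`S = u₁H₁ ∪ ⋯ ∪ uₙH₁`. -/
theorem stmt_19 {S : Type u} [Monoid S]
    (m : ℕ) (si : Fin m → S)
    (hcover : {a : S | Set.range (fun x => a * x) = Set.univ}ᶜ =
      ⋃ i, Set.range (fun x => si i * x))
    (hfree : ∀ (I : Type u) (Φ : Ultrafilter I), IsFreeAct S (Filter.Germ (Φ : Filter I) S)) :
    ∃ (n : ℕ) (u : Fin n → S), ∀ x : S, ∃ (i : Fin n) (h : Sˣ), x = u i * (h : S) := by
  simp only [range_mul_eq_univ_iff, Set.compl_ofPred] at hcover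
  have hseq := exists_lt_eq_mul_eq_mul hcover (hfree _ _)
  have : IsDedekindFiniteMonoid S := isDedekindFiniteMonoid_of_forall_exists_lt fun a => by
    obtain ⟨i, j, hij, τ, p, q, -, hq, hi, hj⟩ := hseq a
    exact ⟨i, j, hij, τ, p, q, hq, hi, hj⟩
  have : Finite (Associates S) := finite_associates_of_forall_exists_associated fun a => by
    obtain ⟨i, j, hij, τ, p, q, ⟨p', hp⟩, ⟨q', hq⟩, hi, hj⟩ := hseq a
    have hqp : Associated q p := (associated_one_iff_isUnit.2 (IsUnit.of_mul_eq_one q' hq)).trans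
      (associated_one_iff_isUnit.2 (IsUnit.of_mul_eq_one p' hp)).symm
    exact ⟨j, i, hij.ne', hi ▸ hj ▸ hqp.mul_left τ⟩
  obtain ⟨n, u, hu⟩ := exists_fin_cover_of_finite_associates (S := S)
  exact ⟨n, u, fun x => let ⟨i, h, hx⟩ := hu x; ⟨i, h, hx.symm⟩⟩
end
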